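/- arXiv:1601.00390 — 6 statements merged into one kernel-verified Lean document; each statement's English description precedes it below -/
import Mathlib

section
/- Let f : ℝ^{m×n} → ℝ be convex, let Ω ⊂ ℝⁿ be a bounded open set, let A ∈ ℝ^{m×n}, and let φ : ℝⁿ → ℝ^m be a Lipschitz map vanishing outside Ω. Then f(A)·|Ω| ≤ ∫_Ω f(A + ∇φ(x)) dx. (In other words, every convex function on matrices is quasiconvex.) -/
open MeasureTheory Filter Topology Metric Bornology
open scoped ENNReal NNReal

noncomputable section

/-- The (a.e.-defined) gradient of a map `u : ℝⁿ → ℝᵐ`, identified with an `m × n` matrix: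
its `(i,j)` entry is the `i`-th component of the Fréchet derivative applied to the `j`-th
standard basis vector. -/
def grad {n m : ℕ} (u : EuclideanSpace ℝ (Fin n) → EuclideanSpace ℝ (Fin m))
    (x : EuclideanSpace ℝ (Fin n)) : Matrix (Fin m) (Fin n) ℝ :=
  Matrix.of fun i j => fderiv ℝ u x (EuclideanSpace.single j 1) i

/-!
By Jensen's inequality for the normalised Lebesgue measure on `Ω`, it suffices that
`∫_Ω ∇φ = 0`. Since `∇φ = 0` a.e. outside `Ω`, this is the integral over all of `ℝⁿ` of the
derivatives of a compactly supported Lipschitz map, which vanishes by integration by parts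
against the constant `1`. That `∇φ = 0` a.e. on the zero set `S` of `φ` comes from Lebesgue's
density theorem: at a density point of `S` the tangent cone of `S` is the whole space, so the
derivative there is determined by the values of `φ` on `S`.
-/

open Set

section Lebesgue

variable {E : Type*} [NormedAddCommGroup E] [NormedSpace ℝ E] [FiniteDimensional ℝ E]
  [MeasurableSpace E] [BorelSpace E] (μ : Measure E) [μ.IsAddHaarMeasure]

theorem ae_tangentConeAt_eq_univ (s : Set E) :
    ∀ᵐ x ∂μ.restrict s, tangentConeAt ℝ s x = univ := by
  filter_upwards [Besicovitch.ae_tendsto_measure_inter_div μ s] with x hx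
  refine eq_univ_of_forall fun v => ?_
  have hnear : ∀ ε > 0, ∀ᶠ r in 𝓝[>] (0:ℝ), ∃ w ∈ closedBall v ε, x + r • w ∈ s := by
    intro ε hε
    filter_upwards [Measure.eventually_nonempty_inter_smul_of_density_one μ s x hx (closedBall v ε)
      measurableSet_closedBall (measure_closedBall_pos μ v hε).ne'] with r ⟨y, hys, hy⟩
    obtain ⟨_, ⟨w, hw, rfl⟩, rfl⟩ := by simpa only [singleton_add, mem_image] using hy
    exact ⟨w, hw, hys⟩
  refine mem_tangentConeAt_of_frequently (𝓝[>] (0:ℝ) ×ˢ 𝓝 v) (fun p => p.1⁻¹)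
    (fun p => p.1 • p.2) ?_ ?_ ?_
  · simpa using (tendsto_nhdsWithin_of_tendsto_nhds tendsto_id |>.comp tendsto_fst).smul
      (tendsto_snd (f := 𝓝[>] (0:ℝ)) (g := 𝓝 v))
  · refine ((nhdsGT_basis (0:ℝ)).prod nhds_basis_closedBall).frequently_iff.2 ?_
    rintro ⟨δ, ε⟩ ⟨hδ, hε⟩
    obtain ⟨r, ⟨w, hw, hws⟩, hr⟩ := ((hnear ε hε).and (Ioo_mem_nhdsGT hδ)).exists
    exact ⟨(r, w), ⟨hr, hw⟩, hws⟩
  · refine tendsto_snd.congr' ?_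
    filter_upwards [prod_mem_prod self_mem_nhdsWithin univ_mem] with p hp
    simp [inv_smul_smul₀ (ne_of_gt (mem_Ioi.1 hp.1))]

theorem ae_fderiv_eq_zero_of_eqOn_zero {F : Type*} [NormedAddCommGroup F] [NormedSpace ℝ F]
    {u : E → F} {s : Set E} (hu : EqOn u 0 s) :
    ∀ᵐ x ∂μ, x ∈ s → DifferentiableAt ℝ u x → fderiv ℝ u x = 0 := by
  filter_upwards [ae_imp_of_ae_restrict (ae_tangentConeAt_eq_univ μ s)] with x hx hxs hdiff
  have hunique : UniqueDiffWithinAt ℝ s x := ⟨by simp [hx hxs], subset_closure hxs⟩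
  exact hunique.eq hdiff.hasFDerivAt.hasFDerivWithinAt
    ((hasFDerivWithinAt_const 0 x s).congr hu (hu hxs))

theorem integral_fderiv_apply_eq_zero {u : E → ℝ} {C : ℝ≥0} (hu : LipschitzWith C u)
    (h'u : HasCompactSupport u) (v : E) : ∫ x, fderiv ℝ u x v ∂μ = 0 := by
  have h := (LipschitzWith.const (1 : ℝ)).integral_lineDeriv_mul_eq (μ := μ) hu h'u (-v)
  simp only [lineDeriv, deriv_const', zero_mul, integral_zero, neg_neg, mul_one] at h
  rw [integral_congr_ae (hu.ae_differentiableAt.mono fun x hx => hx.lineDeriv_eq_fderiv.symm)]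
  exact h.symm

theorem setIntegral_fderiv_eq_zero {F : Type*} [NormedAddCommGroup F] [NormedSpace ℝ F]
    [FiniteDimensional ℝ F] {u : E → F} {C : ℝ≥0} (hu : LipschitzWith C u) {s : Set E}
    (hs : IsBounded s) (hu0 : ∀ x ∉ s, u x = 0) : ∫ x in s, fderiv ℝ u x ∂μ = 0 := by
  have : IsFiniteMeasure (μ.restrict s) := isFiniteMeasure_restrict.2 hs.measure_lt_top.ne
  have hint : Integrable (fderiv ℝ u) (μ.restrict s) :=
    .of_bound (measurable_fderiv ℝ u).aestronglyMeasurable C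
      (ae_of_all _ fun _ => norm_fderiv_le_of_lipschitz ℝ hu)
  refine ContinuousLinearMap.ext fun v =>
    SeparatingDual.eq_zero_of_forall_dual_eq_zero (R := ℝ) fun ℓ => ?_
  have hℓu : LipschitzWith (‖ℓ‖₊ * C) (ℓ ∘ u) := ℓ.lipschitz.comp hu
  have hcs : HasCompactSupport (ℓ ∘ u) := HasCompactSupport.intro hs.isCompact_closure
    fun x hx => by simp [hu0 x fun h => hx (subset_closure h)]
  have hout : ∀ᵐ x ∂μ, x ∉ s → fderiv ℝ (ℓ ∘ u) x v = 0 := by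
    filter_upwards [ae_fderiv_eq_zero_of_eqOn_zero μ (u := ℓ ∘ u) (s := sᶜ)
        fun x hx => by simp [hu0 x hx],
      hℓu.ae_differentiableAt] with x hzero hdiff hx
    simp [hzero hx hdiff]
  calc ℓ ((∫ x in s, fderiv ℝ u x ∂μ) v)
      = (ℓ ∘L ContinuousLinearMap.apply ℝ F v) (∫ x in s, fderiv ℝ u x ∂μ) := rfl
    _ = ∫ x in s, fderiv ℝ (ℓ ∘ u) x v ∂μ := by
      rw [← ContinuousLinearMap.integral_comp_comm _ hint]
      refine integral_congr_ae (ae_restrict_of_ae ?_)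
      filter_upwards [hu.ae_differentiableAt] with x hx
      simp [fderiv_comp x ℓ.differentiableAt hx]
    _ = ∫ x, fderiv ℝ (ℓ ∘ u) x v ∂μ := setIntegral_eq_integral_of_ae_compl_eq_zero hout
    _ = 0 := integral_fderiv_apply_eq_zero μ hℓu hcs v

end Lebesgue

theorem ConvexOn.mul_measureReal_univ_le_integral {X V : Type*} [MeasurableSpace X]
    [NormedAddCommGroup V] [NormedSpace ℝ V] [FiniteDimensional ℝ V] {f : V → ℝ}
    (hf : ConvexOn ℝ univ f) {μ : Measure X} [IsFiniteMeasure μ] {g : X → V}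
    (hgm : AEStronglyMeasurable g μ) {C : ℝ} (hgC : ∀ᵐ x ∂μ, ‖g x‖ ≤ C) {a : V}
    (hga : ∫ x, g x ∂μ = μ.real univ • a) :
    f a * μ.real univ ≤ ∫ x, f (g x) ∂μ := by
  rcases eq_zero_or_neZero μ with rfl | _
  · simp
  have hfc : Continuous f := continuousOn_univ.1 (hf.continuousOn isOpen_univ)
  obtain ⟨D, hD⟩ :=
    (isCompact_closedBall (0 : V) C).exists_bound_of_continuousOn hfc.continuousOn
  have hfg : Integrable (f ∘ g) μ := .of_bound (hfc.comp_aestronglyMeasurable hgm) D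
    (hgC.mono fun x hx => hD _ (mem_closedBall_zero_iff.2 hx))
  have hμpos : 0 < μ.real univ := measureReal_univ_pos
  have havg : ⨍ x, g x ∂μ = a := by
    rw [average_eq, hga, smul_smul, inv_mul_cancel₀ hμpos.ne', one_smul]
  have hjensen := hf.map_average_le hfc.continuousOn isClosed_univ
    (ae_of_all _ fun _ => mem_univ _) (.of_bound hgm C hgC) hfg
  rw [havg, average_eq, smul_eq_mul, le_inv_mul_iff₀ hμpos] at hjensen
  rwa [mul_comm]

theorem grad_eq_toMatrix_fderiv {n m : ℕ}
    (u : EuclideanSpace ℝ (Fin n) → EuclideanSpace ℝ (Fin m)) (x : EuclideanSpace ℝ (Fin n)) :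
    grad u x = LinearMap.toMatrix (EuclideanSpace.basisFun (Fin n) ℝ).toBasis
      (EuclideanSpace.basisFun (Fin m) ℝ).toBasis (fderiv ℝ u x) := by
  ext i j
  simp [grad, LinearMap.toMatrix_apply]

theorem stmt0_general {m n : ℕ} (f : Matrix (Fin m) (Fin n) ℝ → ℝ)
    (hf : ConvexOn ℝ Set.univ f)
    (Ω : Set (EuclideanSpace ℝ (Fin n))) (hΩb : Bornology.IsBounded Ω)
    (A : Matrix (Fin m) (Fin n) ℝ)
    (φ : EuclideanSpace ℝ (Fin n) → EuclideanSpace ℝ (Fin m))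
    (K : ℝ≥0) (hφ : LipschitzWith K φ)
    (hφ0 : ∀ x ∉ Ω, φ x = 0) :
    f A * (volume Ω).toReal ≤ ∫ x in Ω, f (A + grad φ x) := by
  have : IsFiniteMeasure (volume.restrict Ω) := isFiniteMeasure_restrict.2 hΩb.measure_lt_top.ne
  let T := (LinearMap.toMatrix (EuclideanSpace.basisFun (Fin n) ℝ).toBasis
      (EuclideanSpace.basisFun (Fin m) ℝ).toBasis).toLinearMap ∘ₗ ContinuousLinearMap.coeLM ℝ
  have hconv : ConvexOn ℝ univ fun L => f (A + T L) := (hf.translate_right A).comp_linearMap T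
  have key := hconv.mul_measureReal_univ_le_integral (measurable_fderiv ℝ φ).aestronglyMeasurable
    (ae_of_all _ fun _ => norm_fderiv_le_of_lipschitz ℝ hφ)
    (a := 0) (by rw [setIntegral_fderiv_eq_zero volume hφ hΩb hφ0, smul_zero])
  simpa [T, grad_eq_toMatrix_fderiv, measureReal_def] using key

/-- Every convex function on `m × n` matrices is quasiconvex: for every bounded open set
`Ω ⊆ ℝⁿ`, every matrix `A` and every Lipschitz map `φ : ℝⁿ → ℝᵐ` vanishing outside `Ω`,
`f(A)·|Ω| ≤ ∫_Ω f(A + ∇φ)`. -/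
theorem stmt0 {m n : ℕ} (f : Matrix (Fin m) (Fin n) ℝ → ℝ)
    (hf : ConvexOn ℝ Set.univ f)
    (Ω : Set (EuclideanSpace ℝ (Fin n))) (hΩo : IsOpen Ω) (hΩb : Bornology.IsBounded Ω)
    (A : Matrix (Fin m) (Fin n) ℝ)
    (φ : EuclideanSpace ℝ (Fin n) → EuclideanSpace ℝ (Fin m))
    (K : ℝ≥0) (hφ : LipschitzWith K φ)
    (hφ0 : ∀ x ∉ Ω, φ x = 0) :
    f A * (volume Ω).toReal ≤ ∫ x in Ω, f (A + grad φ x) :=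
  stmt0_general f hf Ω hΩb A φ K hφ hφ0
end
end

section
/- Define I(u) := ∫₀¹ (1 − u′(x)²)² + u(x)² dx for Lipschitz functions u : [0,1] → ℝ, where u′ is the almost-everywhere defined derivative. Let Y := { u : [0,1] → ℝ Lipschitz : |u′(x)| ≤ 1 for a.e. x, u(0) = u(1) = 0 }. Then inf_{u ∈ Y} I(u) = 0, while I(u) > 0 for every u ∈ Y; in particular the infimum of I over Y is not attained. (The infimum is realized along the zig-zag sequence u_k(x) := k⁻¹ u(kx), where u is the 1-periodic extension of the hat function equal to x on [0,1/2] and to 1−x on [1/2,1].) -/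
/-!
A Lipschitz `u` with `I(u) = 0` would vanish a.e. on `(0, 1)`, hence identically there by
continuity; but then `u' = 0` on `(0, 1)` and the first term of the integrand equals `1`, so
`I(u) = 1`. Thus `I > 0` on all Lipschitz functions. Along the zig-zag
`uₙ(x) = hat(n x) / n` we have `|uₙ'| = 1` off the countable set `n⁻¹ (ℤ / 2)`, so only
the term `uₙ² ≤ 1 / (4 n²)` survives and `I(uₙ) → 0`.
-/

open MeasureTheory Filter Topology
open scoped ENNReal NNReal

noncomputable section

/-- The functional `I(u) = ∫₀¹ (1 - u'(x)²)² + u(x)² dx`, where `u'` is the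
(a.e.-defined) derivative of the Lipschitz function `u`. -/
def I1 (u : ℝ → ℝ) : ℝ :=
  ∫ x in Set.Icc (0:ℝ) 1, ((1 - (deriv u x) ^ 2) ^ 2 + (u x) ^ 2)

/-- The admissible class `Y`: Lipschitz functions on `[0,1]` with `|u'| ≤ 1` a.e. and
`u(0) = u(1) = 0`. -/
def Y : Set (ℝ → ℝ) :=
  {u | (∃ K : ℝ≥0, LipschitzWith K u) ∧
       (∀ᵐ x ∂(volume.restrict (Set.Icc (0:ℝ) 1)), |deriv u x| ≤ 1) ∧
       u 0 = 0 ∧ u 1 = 0}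

open Set

/-- The distance from `x` to the nearest integer, i.e. the 1-periodic hat function. -/
def hat (x : ℝ) : ℝ := ‖(x : UnitAddCircle)‖

lemma hat_eq (x : ℝ) : hat x = |x - round x| := UnitAddCircle.norm_eq

lemma hat_lipschitz : LipschitzWith 1 hat :=
  LipschitzWith.of_dist_le_mul fun x y => by
    rw [NNReal.coe_one, one_mul, Real.dist_eq, dist_eq_norm]
    calc |hat x - hat y| ≤ ‖(x : UnitAddCircle) - y‖ := abs_norm_sub_norm_le _ _
      _ ≤ ‖x - y‖ := QuotientAddGroup.norm_mk_le_norm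

lemma hat_nonneg (x : ℝ) : 0 ≤ hat x := norm_nonneg _

lemma hat_le_half (x : ℝ) : hat x ≤ 1 / 2 := hat_eq x ▸ abs_sub_round x

lemma abs_deriv_hat {x : ℝ} (hx : x ∉ range fun n : ℤ => (n : ℝ) / 2) :
    |deriv hat x| = 1 := by
  have hx' (n : ℤ) : x ≠ n / 2 := fun h => hx ⟨n, h.symm⟩
  set m : ℤ := round x
  have hmem : x ∈ Ioo (m - 1 / 2 : ℝ) (m + 1 / 2) := by
    have hm : x ∈ Ico (m - 1 / 2 : ℝ) (m + 1 / 2) := round_eq_iff.mp rfl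
    exact ⟨hm.1.lt_of_ne fun h => hx' (2 * m - 1) (by push_cast; linarith), hm.2⟩
  have hloc : hat =ᶠ[𝓝 x] fun y => |y - m| := by
    filter_upwards [Ioo_mem_nhds hmem.1 hmem.2] with y hy
    rw [hat_eq, round_eq_iff.mpr (Ioo_subset_Ico_self hy)]
  have hxm : x - m ≠ 0 := sub_ne_zero.mpr fun h => hx' (2 * m) (by push_cast; linarith)
  rw [hloc.deriv_eq, deriv_comp_sub_const, deriv_abs]
  rcases hxm.lt_or_gt with h | h <;> simp [h]

def zigzag (c x : ℝ) : ℝ := hat (c * x) / c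

lemma zigzag_lipschitz (c : ℝ) : LipschitzWith 1 (zigzag c) :=
  LipschitzWith.of_dist_le_mul fun x y => by
    have h := hat_lipschitz.dist_le_mul (c * x) (c * y)
    simp only [NNReal.coe_one, one_mul, Real.dist_eq, ← mul_sub, abs_mul] at h ⊢
    rw [zigzag, zigzag, ← sub_div, abs_div]
    rcases eq_or_ne c 0 with rfl | hc
    · simp
    · exact (div_le_iff₀ (abs_pos.mpr hc)).mpr (h.trans_eq (mul_comm _ _))

lemma abs_zigzag_le (c x : ℝ) : |zigzag c x| ≤ |2 * c|⁻¹ := by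
  rw [zigzag, abs_div, abs_of_nonneg (hat_nonneg _)]
  calc hat (c * x) / |c| ≤ 1 / 2 / |c| :=
        div_le_div_of_nonneg_right (hat_le_half _) (abs_nonneg c)
    _ = |2 * c|⁻¹ := by rw [abs_mul, abs_two]; ring

lemma zigzag_natCast_mem_Y (n : ℕ) : zigzag n ∈ Y := by
  refine ⟨⟨1, zigzag_lipschitz n⟩, ae_of_all _ fun x => ?_, by simp [zigzag, hat_eq], ?_⟩
  · simpa using norm_deriv_le_of_lipschitz (x₀ := x) (zigzag_lipschitz n)
  · simp [zigzag, hat_eq]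

lemma abs_deriv_zigzag_ae {c : ℝ} (hc : c ≠ 0) : ∀ᵐ x, |deriv (zigzag c) x| = 1 := by
  have hnull : ((c * ·) ⁻¹' range fun n : ℤ => (n : ℝ) / 2).Countable :=
    (countable_range _).preimage (mul_right_injective₀ hc)
  filter_upwards [hnull.ae_notMem volume] with x hx
  unfold zigzag
  rw [deriv_div_const, deriv_comp_mul_left, smul_eq_mul, mul_div_cancel_left₀ _ hc]
  exact abs_deriv_hat hx

lemma I1_zigzag_le {c : ℝ} (hc : c ≠ 0) : I1 (zigzag c) ≤ (2 * c)⁻¹ ^ 2 := by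
  have hbound : ∀ᵐ x ∂volume.restrict (Icc (0 : ℝ) 1),
      ‖(1 - deriv (zigzag c) x ^ 2) ^ 2 + zigzag c x ^ 2‖ ≤ (2 * c)⁻¹ ^ 2 := by
    filter_upwards [ae_restrict_of_ae (abs_deriv_zigzag_ae hc)] with x hx
    rw [← sq_abs (deriv _ x), hx, ← sq_abs (zigzag c x), ← sq_abs (2 * c)⁻¹, abs_inv]
    simpa using pow_le_pow_left₀ (abs_nonneg _) (abs_zigzag_le c x) 2
  calc I1 (zigzag c) ≤ ‖I1 (zigzag c)‖ := Real.le_norm_self _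
    _ ≤ (2 * c)⁻¹ ^ 2 * volume.real (Icc (0 : ℝ) 1) :=
        norm_setIntegral_le_of_norm_le_const_ae (by simp) hbound
    _ = (2 * c)⁻¹ ^ 2 := by simp

lemma I1_nonneg (u : ℝ → ℝ) : 0 ≤ I1 u :=
  integral_nonneg fun _ => by positivity

lemma integrableOn_I1_integrand {u : ℝ → ℝ} {K : ℝ≥0} (hu : LipschitzWith K u) :
    IntegrableOn (fun x => (1 - deriv u x ^ 2) ^ 2 + u x ^ 2) (Icc 0 1) := by
  refine .add (Integrable.of_bound (C := (1 + K ^ 2) ^ 2) ?_ (ae_of_all _ fun x => ?_)) ?_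
  · exact ((measurable_const.sub ((measurable_deriv u).pow_const 2)).pow_const 2)
      |>.aestronglyMeasurable
  · have hd : deriv u x ^ 2 ≤ K ^ 2 := by
      simpa using pow_le_pow_left₀ (norm_nonneg _) (norm_deriv_le_of_lipschitz hu) 2
    rw [Real.norm_eq_abs, abs_of_nonneg (by positivity)]
    nlinarith [sq_nonneg (deriv u x)]
  · exact ((hu.continuous.pow 2).continuousOn).integrableOn_Icc

lemma eqOn_zero_of_I1_eq_zero {u : ℝ → ℝ} {K : ℝ≥0} (hu : LipschitzWith K u)
    (h : I1 u = 0) : EqOn u 0 (Ioo 0 1) := by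
  rw [I1, integral_Icc_eq_integral_Ioo] at h
  have hzero := (integral_eq_zero_iff_of_nonneg (fun _ => by positivity)
    ((integrableOn_I1_integrand hu).mono_set Ioo_subset_Icc_self)).mp h
  refine Measure.eqOn_open_of_ae_eq (μ := volume) ?_ isOpen_Ioo hu.continuous.continuousOn
    continuousOn_const
  filter_upwards [hzero] with x hx
  simp only [Pi.zero_apply] at hx ⊢
  nlinarith [sq_nonneg (1 - deriv u x ^ 2), sq_nonneg (u x)]

lemma I1_eq_one_of_eqOn_zero {u : ℝ → ℝ} (h : EqOn u 0 (Ioo 0 1)) : I1 u = 1 := by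
  rw [I1, integral_Icc_eq_integral_Ioo]
  have hconst : ∀ x ∈ Ioo (0 : ℝ) 1, (1 - deriv u x ^ 2) ^ 2 + u x ^ 2 = 1 := fun x hx => by
    have hloc : u =ᶠ[𝓝 x] fun _ => 0 := eventuallyEq_of_mem (isOpen_Ioo.mem_nhds hx) h
    simp [hloc.deriv_eq, h hx]
  rw [setIntegral_congr_fun measurableSet_Ioo hconst]
  simp

lemma I1_pos_of_lipschitz {u : ℝ → ℝ} {K : ℝ≥0} (hu : LipschitzWith K u) : 0 < I1 u :=
  (I1_nonneg u).lt_of_ne fun h =>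
    one_ne_zero <| (I1_eq_one_of_eqOn_zero (eqOn_zero_of_I1_eq_zero hu h.symm)).symm.trans
      h.symm

/-- The infimum of `I` over `Y` is `0`, yet `I(u) > 0` for every `u ∈ Y`; in particular
the infimum is not attained. -/
theorem stmt1 : IsGLB (I1 '' Y) 0 ∧ ∀ u ∈ Y, 0 < I1 u := by
  refine ⟨⟨?_, fun b hb => ?_⟩, fun u ⟨⟨K, hu⟩, _⟩ => I1_pos_of_lipschitz hu⟩
  · rintro _ ⟨u, -, rfl⟩
    exact I1_nonneg u
  · have hlim : Tendsto (fun n : ℕ => (2 * (n : ℝ))⁻¹ ^ 2) atTop (𝓝 0) := by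
      simpa using (tendsto_inv_atTop_zero.comp
        (tendsto_natCast_atTop_atTop.const_mul_atTop (two_pos : (0 : ℝ) < 2))).pow 2
    refine ge_of_tendsto hlim (eventually_ge_atTop 1 |>.mono fun n hn => ?_)
    exact (hb ⟨_, zigzag_natCast_mem_Y n, rfl⟩).trans (I1_zigzag_le (by positivity))
end
end

section
/- Let Ω ⊂ ℝⁿ be a bounded open set with Lipschitz boundary, let f : ℝ^{m×n} → ℝ be continuous and quasiconvex, and let A ∈ ℝ^{m×n}. Suppose {u_k} is a sequence of maps u_k : Ω → ℝ^m that are Lipschitz with a common Lipschitz constant and that converge uniformly on Ω to the affine map u(x) = Ax. Then f(A)·|Ω| ≤ liminf_{k→∞} ∫_Ω f(∇u_k(x)) dx. -/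
/-!
Cut off the error `u_k - A·x` by a Lipschitz function `ζ` that equals `1` on an open set
`U ⊆ Ω` carrying all but `δ` of the measure of `Ω` and vanishes off `Ω`. Since `u_k → A·x`
uniformly, `φ = ζ (u_k - A·x)` has a Lipschitz constant independent of `k` for `k` large, so it
is a test map for quasiconvexity on `Ω`. As `A + ∇φ = ∇u_k` on `U`, and both integrands are
bounded by the maximum `M` of `|f|` on a fixed box of matrices, this gives
`f(A)|Ω| ≤ ∫_Ω f(∇u_k) + 2Mδ` for all large `k`; then let `δ → 0`.
-/

open MeasureTheory Filter Topology Metric Bornology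
open scoped ENNReal NNReal RealInnerProductSpace

noncomputable section

/-- A set `Ω ⊆ ℝⁿ` has Lipschitz boundary if near each boundary point, after a rotation,
`Ω` is the region above the graph of a Lipschitz function: there are a unit direction `v`,
a radius `r > 0` and a Lipschitz function `h` (evaluated on the orthogonal complement of `v`)
such that inside the ball `B(x,r)`, membership in `Ω` is equivalent to
`h(z - ⟨z,v⟩v) < ⟨z,v⟩`. -/
def HasLipschitzBoundary {n : ℕ} (Ω : Set (EuclideanSpace ℝ (Fin n))) : Prop :=
  ∀ x ∈ frontier Ω, ∃ (v : EuclideanSpace ℝ (Fin n)) (r : ℝ) (K : ℝ≥0)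
      (h : EuclideanSpace ℝ (Fin n) → ℝ), ‖v‖ = 1 ∧ 0 < r ∧ LipschitzWith K h ∧
      ∀ z ∈ Metric.ball x r, (z ∈ Ω ↔ h (z - ⟪z, v⟫ • v) < ⟪z, v⟫)

/-- `f : ℝ^{m×n} → ℝ` is quasiconvex: for every bounded open set `D ⊆ ℝⁿ`, every matrix `A`
and every Lipschitz map `φ` vanishing outside `D`, `f(A)·|D| ≤ ∫_D f(A + ∇φ)`. -/
def QuasiconvexFn {m n : ℕ} (f : Matrix (Fin m) (Fin n) ℝ → ℝ) : Prop :=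
  ∀ D : Set (EuclideanSpace ℝ (Fin n)), IsOpen D → Bornology.IsBounded D →
    ∀ (A : Matrix (Fin m) (Fin n) ℝ) (φ : EuclideanSpace ℝ (Fin n) → EuclideanSpace ℝ (Fin m)),
      (∃ K : ℝ≥0, LipschitzWith K φ) → (∀ x ∉ D, φ x = 0) →
        f A * (volume D).toReal ≤ ∫ x in D, f (A + grad φ x)

def Matrix.euclideanCLM {m n : ℕ} (A : Matrix (Fin m) (Fin n) ℝ) :
    EuclideanSpace ℝ (Fin n) →L[ℝ] EuclideanSpace ℝ (Fin m) :=
  LinearMap.toContinuousLinearMap (Matrix.toEuclideanLin A)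

section Gradient

variable {m n : ℕ}

theorem abs_grad_apply_le {K : ℝ≥0} {v : EuclideanSpace ℝ (Fin n) → EuclideanSpace ℝ (Fin m)}
    (hv : LipschitzWith K v) (x : EuclideanSpace ℝ (Fin n)) (i : Fin m) (j : Fin n) :
    |grad v x i j| ≤ K :=
  calc |grad v x i j| ≤ ‖fderiv ℝ v x (EuclideanSpace.single j 1)‖ :=
      (Real.norm_eq_abs _).symm.trans_le (PiLp.norm_apply_le _ i)
    _ ≤ ‖fderiv ℝ v x‖ := by
      simpa using (fderiv ℝ v x).le_opNorm (EuclideanSpace.single j 1)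
    _ ≤ K := norm_fderiv_le_of_lipschitz ℝ hv

theorem grad_euclideanCLM (A : Matrix (Fin m) (Fin n) ℝ) (x : EuclideanSpace ℝ (Fin n)) :
    grad A.euclideanCLM x = A := by
  ext i j
  rw [grad, Matrix.euclideanCLM, ContinuousLinearMap.fderiv]
  simp [Matrix.toLpLin_apply]

theorem grad_eq_sub_of_eventuallyEq {φ v w : EuclideanSpace ℝ (Fin n) → EuclideanSpace ℝ (Fin m)}
    {x : EuclideanSpace ℝ (Fin n)} (hv : DifferentiableAt ℝ v x) (hw : DifferentiableAt ℝ w x)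
    (h : φ =ᶠ[𝓝 x] v - w) : grad φ x = grad v x - grad w x := by
  ext i j
  simp [grad, h.fderiv_eq, fderiv_sub hv hw]

theorem measurable_comp_grad {f : Matrix (Fin m) (Fin n) ℝ → ℝ} (hf : Continuous f)
    (v : EuclideanSpace ℝ (Fin n) → EuclideanSpace ℝ (Fin m)) :
    Measurable fun x => f (grad v x) := by
  have : Continuous fun T : EuclideanSpace ℝ (Fin n) →L[ℝ] EuclideanSpace ℝ (Fin m) =>
      f (Matrix.of fun i j => T (EuclideanSpace.single j 1) i) := by fun_prop
  exact this.measurable.comp (measurable_fderiv ℝ v)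

theorem Continuous.exists_abs_le_of_forall_abs_apply_le {f : Matrix (Fin m) (Fin n) ℝ → ℝ}
    (hf : Continuous f) (C : ℝ) : ∃ M, ∀ B, (∀ i j, |B i j| ≤ C) → |f B| ≤ M := by
  have hbox : IsCompact
      (Set.univ.pi fun _ : Fin m => Set.univ.pi fun _ : Fin n => Set.Icc (-C) C) :=
    isCompact_univ_pi fun _ => isCompact_univ_pi fun _ => isCompact_Icc
  obtain ⟨M, hM⟩ := hbox.exists_bound_of_continuousOn hf.continuousOn
  exact ⟨M, fun B hB => hM B fun i _ j _ => abs_le.1 (hB i j)⟩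

end Gradient

section Cutoff

variable {X : Type*}

structure IsLipschitzCutoff [PseudoEMetricSpace X] (ζ : X → ℝ) (U Ω : Set X) (L : ℝ≥0) :
    Prop where
  lipschitzWith : LipschitzWith L ζ
  mem_Icc : ∀ x, ζ x ∈ Set.Icc 0 1
  eq_one : ∀ x ∈ U, ζ x = 1
  eq_zero : ∀ x ∉ Ω, ζ x = 0

theorem IsLipschitzCutoff.lipschitzWith_smul [PseudoMetricSpace X] {F : Type*}
    [SeminormedAddCommGroup F] [NormedSpace ℝ F] {ζ : X → ℝ} {U Ω : Set X} {L Lg c : ℝ≥0}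
    (hζ : IsLipschitzCutoff ζ U Ω L) {g : X → F} (hg : LipschitzWith Lg g)
    (hgc : ∀ x ∈ Ω, ‖g x‖ ≤ c) : LipschitzWith (Lg + L * c) fun x => ζ x • g x := by
  refine LipschitzWith.of_dist_le_mul fun x y => ?_
  wlog hy : y ∈ Ω generalizing x y
  · by_cases hx : x ∈ Ω
    · simpa only [dist_comm] using this y x hx
    · simp only [hζ.eq_zero x hx, hζ.eq_zero y hy, zero_smul, dist_self]
      positivity
  have hζx : |ζ x| ≤ 1 := abs_le.2 ⟨by linarith [(hζ.mem_Icc x).1], (hζ.mem_Icc x).2⟩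
  have hζxy : |ζ x - ζ y| ≤ L * dist x y := by
    simpa [Real.dist_eq] using hζ.lipschitzWith.dist_le_mul x y
  have hgxy : ‖g x - g y‖ ≤ Lg * dist x y := by
    simpa [dist_eq_norm] using hg.dist_le_mul x y
  calc dist (ζ x • g x) (ζ y • g y) = ‖ζ x • (g x - g y) + (ζ x - ζ y) • g y‖ := by
        rw [dist_eq_norm, smul_sub, sub_smul]; abel_nf
    _ ≤ |ζ x| * ‖g x - g y‖ + |ζ x - ζ y| * ‖g y‖ := by
        simpa only [norm_smul, Real.norm_eq_abs] using
          norm_add_le (ζ x • (g x - g y)) ((ζ x - ζ y) • g y)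
    _ ≤ 1 * (Lg * dist x y) + L * dist x y * c := by
        gcongr
        exact hgc y hy
    _ = ↑(Lg + L * c) * dist x y := by push_cast; ring

theorem exists_isLipschitzCutoff [PseudoMetricSpace X] [MeasurableSpace X]
    [OpensMeasurableSpace X] (μ : Measure X) {Ω : Set X} (hΩo : IsOpen Ω) (hΩμ : μ Ω ≠ ∞)
    {δ : ℝ≥0∞} (hδ : 0 < δ) :
    ∃ (U : Set X) (L : ℝ≥0) (ζ : X → ℝ),
      IsOpen U ∧ IsLipschitzCutoff ζ U Ω L ∧ μ (Ω \ U) < δ := by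
  rcases Ωᶜ.eq_empty_or_nonempty with hΩ | hΩ
  · rw [Set.compl_empty_iff] at hΩ
    refine ⟨Ω, 0, 1, hΩo, ⟨LipschitzWith.const 1, fun _ => by simp, fun _ _ => rfl, ?_⟩, ?_⟩
    · simp [hΩ]
    · simpa using hδ
  have hlim : Tendsto (fun r => μ (Ω ∩ thickening r Ωᶜ)) (𝓝[>] 0) (𝓝 0) := by
    have : IsFiniteMeasure (μ.restrict Ω) := isFiniteMeasure_restrict.2 hΩμ
    have := tendsto_measure_thickening_of_isClosed (μ := μ.restrict Ω)
      ⟨1, one_pos, measure_ne_top _ _⟩ hΩo.isClosed_compl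
    simpa [Measure.restrict_apply' hΩo.measurableSet, Set.inter_comm] using this
  obtain ⟨r, hrδ, hr : 0 < r⟩ :=
    ((hlim.eventually (gt_mem_nhds hδ)).and (self_mem_nhdsWithin (a := (0 : ℝ)))).exists
  refine ⟨{x | r / 2 < infDist x Ωᶜ}, ‖(r / 2)⁻¹‖₊ * 1,
    fun x => min 1 ((r / 2)⁻¹ * infDist x Ωᶜ),
    isOpen_lt continuous_const (lipschitz_infDist_pt _).continuous, ⟨?_, ?_, ?_, ?_⟩, ?_⟩
  · exact ((lipschitzWith_smul (r / 2)⁻¹).comp (lipschitz_infDist_pt Ωᶜ)).const_min 1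
  · exact fun x =>
      ⟨le_min zero_le_one (mul_nonneg (by positivity) infDist_nonneg), min_le_left _ _⟩
  · intro x hx
    exact min_eq_left ((one_le_inv_mul₀ (by positivity)).2 (le_of_lt hx))
  · intro x hx
    simp [infDist_zero_of_mem (Set.mem_compl hx)]
  · refine (measure_mono ?_).trans_lt hrδ
    rintro x ⟨hxΩ, hx⟩
    exact ⟨hxΩ, (mem_thickening_iff_infDist_lt hΩ).2 ((not_lt.1 hx).trans_lt (half_lt_self hr))⟩

end Cutoff

theorem setIntegral_le_setIntegral_add_of_ae_eq_on {X : Type*} [MeasurableSpace X]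
    {μ : Measure X} {Ω U : Set X} {F G : X → ℝ} {M : ℝ} (hΩ : μ Ω ≠ ∞) (hU : MeasurableSet U)
    (hUΩ : U ⊆ Ω) (hF : AEStronglyMeasurable F μ) (hG : AEStronglyMeasurable G μ)
    (hFM : ∀ x, |F x| ≤ M) (hGM : ∀ x, |G x| ≤ M) (hFG : ∀ᵐ x ∂μ, x ∈ U → F x = G x) :
    ∫ x in Ω, F x ∂μ ≤ ∫ x in Ω, G x ∂μ + 2 * M * μ.real (Ω \ U) := by
  have hrest : μ (Ω \ U) < ∞ := (measure_mono Set.sdiff_subset).trans_lt hΩ.lt_top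
  have hdiff : ∀ H : X → ℝ, AEStronglyMeasurable H μ → (∀ x, |H x| ≤ M) →
      |∫ x in Ω, H x ∂μ - ∫ x in U, H x ∂μ| ≤ M * μ.real (Ω \ U) := fun H hH hHM => by
    rw [← setIntegral_sdiff hU (Measure.integrableOn_of_bounded hΩ hH (ae_of_all _ hHM)) hUΩ,
      ← Real.norm_eq_abs]
    exact norm_setIntegral_le_of_norm_le_const hrest fun x _ =>
      (Real.norm_eq_abs _).trans_le (hHM x)
  have hUFG := setIntegral_congr_ae hU hFG
  have hF' := abs_le.1 (hdiff F hF hFM)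
  have hG' := abs_le.1 (hdiff G hG hGM)
  linarith [hF'.2, hG'.1]

theorem QuasiconvexFn.mul_volume_le_setIntegral_grad_add {m n : ℕ}
    {f : Matrix (Fin m) (Fin n) ℝ → ℝ} (hfq : QuasiconvexFn f) (hfc : Continuous f)
    {Ω U : Set (EuclideanSpace ℝ (Fin n))} (hΩo : IsOpen Ω) (hΩb : IsBounded Ω) (hUo : IsOpen U)
    {ζ : EuclideanSpace ℝ (Fin n) → ℝ} {L : ℝ≥0} (hζ : IsLipschitzCutoff ζ U Ω L)
    {A : Matrix (Fin m) (Fin n) ℝ} {LA K c : ℝ≥0} {M : ℝ}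
    (hA : LipschitzWith LA A.euclideanCLM)
    (hM : ∀ B : Matrix (Fin m) (Fin n) ℝ, (∀ i j, |B i j| ≤ K + 2 * LA + 1) → |f B| ≤ M)
    {v : EuclideanSpace ℝ (Fin n) → EuclideanSpace ℝ (Fin m)} (hv : LipschitzWith K v)
    (hvc : ∀ x ∈ Ω, ‖v x - A.euclideanCLM x‖ ≤ c) (hLc : L * c ≤ 1) :
    f A * volume.real Ω ≤ (∫ x in Ω, f (grad v x)) + 2 * M * volume.real (Ω \ U) := by
  set w : EuclideanSpace ℝ (Fin n) → EuclideanSpace ℝ (Fin m) := fun x => v x - A.euclideanCLM x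
  set φ := fun x => ζ x • w x
  have hφ : LipschitzWith (K + LA + 1) φ :=
    (hζ.lipschitzWith_smul (hv.sub hA) hvc).weaken (by gcongr)
  have hUΩ : U ⊆ Ω := fun x hxU => by
    by_contra hxΩ
    simpa [hζ.eq_zero x hxΩ] using hζ.eq_one x hxU
  have hgrad_v : ∀ x, |f (grad v x)| ≤ M := fun x => hM _ fun i j =>
    (abs_grad_apply_le hv x i j).trans (by linarith [LA.coe_nonneg])
  have hgrad_φ : ∀ x, |f (A + grad φ x)| ≤ M := fun x => hM _ fun i j => by
    have hAij := abs_grad_apply_le hA x i j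
    rw [grad_euclideanCLM] at hAij
    have := abs_grad_apply_le hφ x i j
    push_cast at this
    calc |(A + grad φ x) i j| ≤ |A i j| + |grad φ x i j| := abs_add_le _ _
      _ ≤ K + 2 * LA + 1 := by linarith
  have hae : ∀ᵐ x, x ∈ U → f (A + grad φ x) = f (grad v x) := by
    filter_upwards [hv.ae_differentiableAt] with x hvx hxU
    have hφw : φ =ᶠ[𝓝 x] v - A.euclideanCLM := by
      filter_upwards [hUo.mem_nhds hxU] with y hy
      simp [φ, w, hζ.eq_one y hy]
    rw [grad_eq_sub_of_eventuallyEq hvx A.euclideanCLM.differentiableAt hφw,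
      grad_euclideanCLM, add_sub_cancel]
  calc f A * volume.real Ω ≤ ∫ x in Ω, f (A + grad φ x) :=
        hfq Ω hΩo hΩb A φ ⟨_, hφ⟩ fun x hx => by simp [φ, hζ.eq_zero x hx]
    _ ≤ (∫ x in Ω, f (grad v x)) + 2 * M * volume.real (Ω \ U) :=
        setIntegral_le_setIntegral_add_of_ae_eq_on hΩb.measure_lt_top.ne hUo.measurableSet hUΩ
          (measurable_comp_grad (f := fun B => f (A + B)) (by fun_prop) φ).aestronglyMeasurable
          (measurable_comp_grad hfc v).aestronglyMeasurable hgrad_φ hgrad_v hae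

theorem stmt3_general {m n : ℕ} (Ω : Set (EuclideanSpace ℝ (Fin n)))
    (hΩo : IsOpen Ω) (hΩb : Bornology.IsBounded Ω)
    (f : Matrix (Fin m) (Fin n) ℝ → ℝ) (hfc : Continuous f) (hfq : QuasiconvexFn f)
    (A : Matrix (Fin m) (Fin n) ℝ)
    (u : ℕ → EuclideanSpace ℝ (Fin n) → EuclideanSpace ℝ (Fin m))
    (K : ℝ≥0) (hLip : ∀ k, LipschitzWith K (u k))
    (hconv : TendstoUniformlyOn u
      (fun x => (WithLp.toLp 2 (fun i => ∑ j, A i j * x j) : EuclideanSpace ℝ (Fin m))) atTop Ω) :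
    f A * (volume Ω).toReal ≤
      Filter.liminf (fun k => ∫ x in Ω, f (grad (u k) x)) Filter.atTop := by
  set LA := ‖A.euclideanCLM‖₊
  obtain ⟨M, hM⟩ := hfc.exists_abs_le_of_forall_abs_apply_le (K + 2 * LA + 1)
  have hM0 : 0 ≤ M := (abs_nonneg _).trans (hM 0 fun _ _ => by simp; positivity)
  have hbdd : IsBoundedUnder (· ≤ ·) atTop fun k => ∫ x in Ω, f (grad (u k) x) := by
    refine ⟨M * volume.real Ω, eventually_map.2 (Eventually.of_forall fun k => ?_)⟩
    refine (le_abs_self _).trans ((Real.norm_eq_abs _).symm.trans_le ?_)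
    refine norm_setIntegral_le_of_norm_le_const hΩb.measure_lt_top fun x _ => hM _ fun i j => ?_
    exact (abs_grad_apply_le (hLip k) x i j).trans (by linarith [LA.coe_nonneg])
  refine le_of_forall_pos_le_add fun ε hε => ?_
  obtain ⟨U, L, ζ, hUo, hζ, hU⟩ := exists_isLipschitzCutoff volume hΩo hΩb.measure_lt_top.ne
    (ENNReal.ofReal_pos.2 (div_pos hε (by positivity : (0 : ℝ) < 2 * M + 1)))
  have hconv' : TendstoUniformlyOn u A.euclideanCLM atTop Ω := hconv
  have hclose : ∀ᶠ k in atTop, ∀ x ∈ Ω, ‖u k x - A.euclideanCLM x‖ ≤ (L + 1)⁻¹ := by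
    filter_upwards [tendstoUniformlyOn_iff.1 hconv' ((L + 1 : ℝ≥0)⁻¹ : ℝ≥0) (by positivity)]
      with k hk x hx
    simpa [dist_eq_norm, norm_sub_rev] using (hk x hx).le
  have hliminf := le_liminf_of_le hbdd.isCoboundedUnder_ge (hclose.mono fun k hk =>
    sub_le_iff_le_add.2 (hfq.mul_volume_le_setIntegral_grad_add hfc hΩo hΩb hUo hζ
      A.euclideanCLM.lipschitz hM (hLip k) hk (mul_inv_le_one_of_le₀ le_self_add zero_le)))
  have hsmall : 2 * M * volume.real (Ω \ U) ≤ ε := by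
    have hUε : volume.real (Ω \ U) < ε / (2 * M + 1) := ENNReal.toReal_lt_of_lt_ofReal hU
    rw [lt_div_iff₀ (by positivity)] at hUε
    nlinarith [measureReal_nonneg (μ := volume) (s := Ω \ U)]
  rw [← measureReal_def]
  linarith

/-- If `f` is continuous and quasiconvex and `u_k` is a sequence of uniformly Lipschitz maps
converging uniformly on `Ω` to the affine map `x ↦ Ax`, then
`f(A)·|Ω| ≤ liminf_k ∫_Ω f(∇u_k)`. -/
theorem stmt3 {m n : ℕ} (Ω : Set (EuclideanSpace ℝ (Fin n)))
    (hΩo : IsOpen Ω) (hΩb : Bornology.IsBounded Ω) (hΩl : HasLipschitzBoundary Ω)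
    (f : Matrix (Fin m) (Fin n) ℝ → ℝ) (hfc : Continuous f) (hfq : QuasiconvexFn f)
    (A : Matrix (Fin m) (Fin n) ℝ)
    (u : ℕ → EuclideanSpace ℝ (Fin n) → EuclideanSpace ℝ (Fin m))
    (K : ℝ≥0) (hLip : ∀ k, LipschitzWith K (u k))
    (hconv : TendstoUniformlyOn u
      (fun x => (WithLp.toLp 2 (fun i => ∑ j, A i j * x j) : EuclideanSpace ℝ (Fin m))) atTop Ω) :
    f A * (volume Ω).toReal ≤
      Filter.liminf (fun k => ∫ x in Ω, f (grad (u k) x)) Filter.atTop :=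
  stmt3_general Ω hΩo hΩb f hfc hfq A u K hLip hconv
end
end

section
/- Let 1 ≤ p < +∞ and let f : ℝ^{m×n} → ℝ be separately convex (i.e., convex in each of the mn matrix entries when the other entries are held fixed) and satisfy |f(A)| ≤ C(1 + |A|^p) for some C > 0 and all A ∈ ℝ^{m×n}. Then there exists a constant α ≥ 0 such that for all A, B ∈ ℝ^{m×n}: |f(A) − f(B)| ≤ α (1 + |A|^{p−1} + |B|^{p−1}) |A − B|. In particular, every such f is locally Lipschitz. -/
open MeasureTheory Filter Topology Metric Bornology
open scoped ENNReal NNReal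

noncomputable section

attribute [local instance] Matrix.normedAddCommGroup

/-!
Fix `R ≥ 0`, put `ρ = R + 1` and let `‖M‖ ≤ R` (entrywise sup norm). On the coordinate line
`t ↦ f (M + t • single i j 1)`, which is convex, the growth bound gives `|f| ≤ C (1 + 4^p) ρ^p`
for `|t| < 3ρ`. A convex function bounded by `K` on an interval is `2K/ε`-Lipschitz at distance
`ε` from its endpoints, so with `ε = ρ` the slope along the line is `O(ρ^(p-1))` for `|t| ≤ 2R`.
Turning `A` into `B` one entry at a time stays in the ball of radius `max ‖A‖ ‖B‖` and takes
`mn` such steps, each of length at most `‖A - B‖`.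
-/

open Set

theorem ConvexOn.abs_sub_le_of_abs_le {g : ℝ → ℝ} (hg : ConvexOn ℝ univ g) {r ε K : ℝ}
    (hε : 0 < ε) (hK : ∀ s, |s| < r → |g s| ≤ K) {s t : ℝ} (hs : |s| < r - ε)
    (ht : |t| < r - ε) : |g s - g t| ≤ 2 * K / ε * |s - t| := by
  have hK₀ : 0 ≤ K := (abs_nonneg _).trans (hK 0 (by rw [abs_zero]; linarith [abs_nonneg s]))
  have hlip := (hg.subset (subset_univ _) (convex_ball 0 r)).lipschitzOnWith_of_abs_le hε
    (fun a ha ↦ hK a (by simpa using ha))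
  have := hlip.dist_le_mul s (by simpa using hs) t (by simpa using ht)
  rwa [Real.dist_eq, Real.dist_eq, Real.coe_toNNReal _ (by positivity)] at this

theorem Real.rpow_max_add_one_le {a b q : ℝ} (ha : 0 ≤ a) (hb : 0 ≤ b) (hq : 0 ≤ q) :
    (max a b + 1) ^ q ≤ 2 ^ q * (1 + a ^ q + b ^ q) := by
  have haq := Real.rpow_nonneg ha q
  have hbq := Real.rpow_nonneg hb q
  have hmax : max a b ^ q ≤ a ^ q + b ^ q := by
    rcases max_choice a b with h | h <;> rw [h] <;> linarith
  rcases le_total (max a b) 1 with h | h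
  · calc (max a b + 1) ^ q ≤ 2 ^ q := Real.rpow_le_rpow (by positivity) (by linarith) hq
      _ ≤ 2 ^ q * (1 + a ^ q + b ^ q) := le_mul_of_one_le_right (by positivity) (by linarith)
  · calc (max a b + 1) ^ q ≤ (2 * max a b) ^ q :=
          Real.rpow_le_rpow (by positivity) (by linarith) hq
      _ = 2 ^ q * max a b ^ q := Real.mul_rpow (by norm_num) (by positivity)
      _ ≤ 2 ^ q * (1 + a ^ q + b ^ q) := by gcongr; linarith

namespace Matrix

variable {m n : Type*} [DecidableEq m] [DecidableEq n]

def mixEntries (A B : Matrix m n ℝ) (s : Finset (m × n)) : Matrix m n ℝ :=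
  of fun i j ↦ if (i, j) ∈ s then B i j else A i j

theorem mixEntries_empty (A B : Matrix m n ℝ) : mixEntries A B ∅ = A := by
  ext; simp [mixEntries]

theorem mixEntries_insert (A B : Matrix m n ℝ) {s : Finset (m × n)} {q : m × n}
    (hq : q ∉ s) :
    mixEntries A B (insert q s) =
      mixEntries A B s + (B q.1 q.2 - A q.1 q.2) • single q.1 q.2 (1 : ℝ) := by
  obtain ⟨i, j⟩ := q
  ext i' j'
  by_cases h : i = i' ∧ j = j'
  · obtain ⟨rfl, rfl⟩ := h
    simp [mixEntries, hq]
  · have h' : ¬(i' = i ∧ j' = j) := fun ⟨hi, hj⟩ ↦ h ⟨hi.symm, hj.symm⟩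
    simp [mixEntries, single_apply_of_ne (h := h), h']

variable [Fintype m] [Fintype n]

theorem mixEntries_univ (A B : Matrix m n ℝ) : mixEntries A B Finset.univ = B := by
  ext; simp [mixEntries]

theorem norm_mixEntries_le (A B : Matrix m n ℝ) (s : Finset (m × n)) :
    ‖mixEntries A B s‖ ≤ max ‖A‖ ‖B‖ := by
  rw [norm_le_iff ((norm_nonneg A).trans (le_max_left _ _))]
  intro i j
  simp only [mixEntries, of_apply]
  split_ifs
  · exact (norm_entry_le_entrywise_sup_norm B).trans (le_max_right _ _)
  · exact (norm_entry_le_entrywise_sup_norm A).trans (le_max_left _ _)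

theorem norm_add_smul_single_le (M : Matrix m n ℝ) (i : m) (j : n) (t : ℝ) :
    ‖M + t • single i j (1 : ℝ)‖ ≤ ‖M‖ + |t| := by
  have hsingle : ‖t • single i j (1 : ℝ)‖ ≤ |t| := by
    rw [norm_le_iff (abs_nonneg t)]
    intro i' j'
    by_cases h : i = i' ∧ j = j'
    · obtain ⟨rfl, rfl⟩ := h
      simp
    · simp [single_apply_of_ne (h := h)]
  linarith [norm_add_le M (t • single i j (1 : ℝ))]

theorem abs_sub_le_of_abs_sub_single_le {f : Matrix m n ℝ → ℝ} {R L : ℝ} (hL : 0 ≤ L)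
    (hf : ∀ (M : Matrix m n ℝ) i j (t : ℝ), ‖M‖ ≤ R → ‖M + t • single i j (1 : ℝ)‖ ≤ R →
      |f (M + t • single i j 1) - f M| ≤ L * |t|)
    {A B : Matrix m n ℝ} (hA : ‖A‖ ≤ R) (hB : ‖B‖ ≤ R) :
    |f B - f A| ≤ Fintype.card m * Fintype.card n * L * ‖B - A‖ := by
  have hmix (s) : ‖mixEntries A B s‖ ≤ R := (norm_mixEntries_le A B s).trans (max_le hA hB)
  have key (s : Finset (m × n)) : |f (mixEntries A B s) - f A| ≤ s.card * L * ‖B - A‖ := by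
    induction s using Finset.induction_on with
    | empty => simp [mixEntries_empty]
    | @insert q s hq ih =>
      have hstep :
          |f (mixEntries A B (insert q s)) - f (mixEntries A B s)| ≤ L * ‖B - A‖ := by
        rw [mixEntries_insert A B hq]
        refine (hf _ _ _ _ (hmix s) ?_).trans (mul_le_mul_of_nonneg_left ?_ hL)
        · rw [← mixEntries_insert A B hq]; exact hmix _
        · exact norm_entry_le_entrywise_sup_norm (B - A)
      calc |f (mixEntries A B (insert q s)) - f A|
          ≤ |f (mixEntries A B (insert q s)) - f (mixEntries A B s)|
            + |f (mixEntries A B s) - f A| := abs_sub_le _ _ _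
        _ ≤ L * ‖B - A‖ + s.card * L * ‖B - A‖ := add_le_add hstep ih
        _ = (insert q s).card * L * ‖B - A‖ := by
          rw [Finset.card_insert_of_notMem hq]; push_cast; ring
  simpa [mixEntries_univ, mul_assoc] using key Finset.univ

def SeparatelyConvex (f : Matrix m n ℝ → ℝ) : Prop :=
  ∀ (A : Matrix m n ℝ) (i : m) (j : n),
    ConvexOn ℝ univ fun t : ℝ ↦ f (A + t • single i j (1 : ℝ))

variable {f : Matrix m n ℝ → ℝ} {p C : ℝ}

theorem abs_sub_le_of_convexOn_single (hp : 0 ≤ p) (hC : 0 ≤ C)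
    (hgrowth : ∀ A, |f A| ≤ C * (1 + ‖A‖ ^ p)) {M : Matrix m n ℝ} {i : m} {j : n}
    (hM : ConvexOn ℝ univ fun t : ℝ ↦ f (M + t • single i j (1 : ℝ))) {R t : ℝ}
    (hMR : ‖M‖ ≤ R) (hMtR : ‖M + t • single i j (1 : ℝ)‖ ≤ R) :
    |f (M + t • single i j 1) - f M| ≤ 2 * C * (1 + 4 ^ p) * (R + 1) ^ (p - 1) * |t| := by
  set ρ := R + 1
  have hρ : 1 ≤ ρ := by linarith [(norm_nonneg M).trans hMR]
  have ht : |t| < 3 * ρ - ρ := by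
    have h₁ : |M i j + t| ≤ R := by
      simpa using (norm_entry_le_entrywise_sup_norm _ (i := i) (j := j)).trans hMtR
    have h₂ : |M i j| ≤ R := (norm_entry_le_entrywise_sup_norm M).trans hMR
    have h₃ : |t| ≤ |M i j + t| + |M i j| := by simpa using abs_sub (M i j + t) (M i j)
    linarith
  have hbound (s : ℝ) (hs : |s| < 3 * ρ) :
      |f (M + s • single i j 1)| ≤ C * (1 + 4 ^ p) * ρ ^ p := by
    have hnorm : ‖M + s • single i j (1 : ℝ)‖ ≤ 4 * ρ := by
      linarith [norm_add_smul_single_le M i j s]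
    have hρp := Real.one_le_rpow hρ hp
    calc |f (M + s • single i j 1)| ≤ C * (1 + ‖M + s • single i j (1 : ℝ)‖ ^ p) := hgrowth _
      _ ≤ C * (1 + (4 * ρ) ^ p) := by gcongr
      _ = C * (1 + 4 ^ p * ρ ^ p) := by rw [Real.mul_rpow (by norm_num) (by positivity)]
      _ ≤ C * ((1 + 4 ^ p) * ρ ^ p) := by gcongr; nlinarith [Real.rpow_nonneg zero_le_four p]
      _ = C * (1 + 4 ^ p) * ρ ^ p := by ring
  have := hM.abs_sub_le_of_abs_le (by positivity : 0 < ρ) hbound ht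
    (by rw [abs_zero]; linarith : |(0 : ℝ)| < 3 * ρ - ρ)
  simp only [zero_smul, add_zero, sub_zero] at this
  calc _ ≤ _ := this
    _ = _ := by rw [Real.rpow_sub_one (by positivity)]; field_simp

namespace SeparatelyConvex

theorem abs_sub_le (hsep : SeparatelyConvex f) (hp : 0 ≤ p) (hC : 0 ≤ C)
    (hgrowth : ∀ A, |f A| ≤ C * (1 + ‖A‖ ^ p)) {R : ℝ} {A B : Matrix m n ℝ}
    (hA : ‖A‖ ≤ R) (hB : ‖B‖ ≤ R) :
    |f B - f A| ≤
      Fintype.card m * Fintype.card n * (2 * C * (1 + 4 ^ p) * (R + 1) ^ (p - 1)) * ‖B - A‖ := by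
  have hR : 0 ≤ R := (norm_nonneg A).trans hA
  exact abs_sub_le_of_abs_sub_single_le (by positivity)
    (fun M i j _ hM hMt ↦ abs_sub_le_of_convexOn_single hp hC hgrowth (hsep M i j) hM hMt) hA hB

theorem abs_sub_le_mul_one_add_rpow (hsep : SeparatelyConvex f) (hp : 1 ≤ p) (hC : 0 ≤ C)
    (hgrowth : ∀ A, |f A| ≤ C * (1 + ‖A‖ ^ p)) (A B : Matrix m n ℝ) :
    |f A - f B| ≤ Fintype.card m * Fintype.card n * (2 * C * (1 + 4 ^ p) * 2 ^ (p - 1)) *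
      (1 + ‖A‖ ^ (p - 1) + ‖B‖ ^ (p - 1)) * ‖A - B‖ := by
  set R := max ‖B‖ ‖A‖
  have hpow : (R + 1) ^ (p - 1) ≤ 2 ^ (p - 1) * (1 + ‖A‖ ^ (p - 1) + ‖B‖ ^ (p - 1)) := by
    rw [add_right_comm]
    exact Real.rpow_max_add_one_le (norm_nonneg B) (norm_nonneg A) (by linarith)
  calc |f A - f B|
      ≤ Fintype.card m * Fintype.card n * (2 * C * (1 + 4 ^ p) * (R + 1) ^ (p - 1)) * ‖A - B‖ :=
        hsep.abs_sub_le (by linarith) hC hgrowth (le_max_left _ _) (le_max_right _ _)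
    _ ≤ Fintype.card m * Fintype.card n *
          (2 * C * (1 + 4 ^ p) * (2 ^ (p - 1) * (1 + ‖A‖ ^ (p - 1) + ‖B‖ ^ (p - 1)))) *
          ‖A - B‖ := by
      gcongr
    _ = _ := by ring

protected theorem locallyLipschitz (hsep : SeparatelyConvex f) (hp : 0 ≤ p) (hC : 0 ≤ C)
    (hgrowth : ∀ A, |f A| ≤ C * (1 + ‖A‖ ^ p)) : LocallyLipschitz f := by
  intro x
  set R := ‖x‖ + 1
  refine ⟨(Fintype.card m * Fintype.card n * (2 * C * (1 + 4 ^ p) * (R + 1) ^ (p - 1))).toNNReal,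
    ball 0 R, isOpen_ball.mem_nhds (by simp [R]), LipschitzOnWith.of_dist_le_mul ?_⟩
  intro A hA B hB
  rw [mem_ball_zero_iff] at hA hB
  rw [Real.dist_eq, dist_eq_norm, Real.coe_toNNReal _ (by positivity)]
  exact hsep.abs_sub_le hp hC hgrowth hB.le hA.le

end SeparatelyConvex

end Matrix

/-- p-Lipschitz continuity of separately convex functions with p-growth: if
`f : ℝ^{m×n} → ℝ` is convex in each matrix entry separately and `|f(A)| ≤ C(1 + |A|^p)`,
then there is `α ≥ 0` with `|f(A) − f(B)| ≤ α(1 + |A|^{p−1} + |B|^{p−1})|A − B|`;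
in particular `f` is locally Lipschitz. -/
theorem stmt4 {m n : ℕ} (p : ℝ) (hp : 1 ≤ p)
    (f : Matrix (Fin m) (Fin n) ℝ → ℝ)
    (hsep : ∀ (A : Matrix (Fin m) (Fin n) ℝ) (i : Fin m) (j : Fin n),
      ConvexOn ℝ Set.univ (fun t : ℝ => f (A + t • Matrix.single i j (1:ℝ))))
    (C : ℝ) (hC : 0 < C)
    (hgrowth : ∀ A, |f A| ≤ C * (1 + ‖A‖ ^ p)) :
    (∃ α : ℝ, 0 ≤ α ∧ ∀ A B : Matrix (Fin m) (Fin n) ℝ,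
        |f A - f B| ≤ α * (1 + ‖A‖ ^ (p - 1) + ‖B‖ ^ (p - 1)) * ‖A - B‖) ∧
      LocallyLipschitz f := by
  have hsep' : Matrix.SeparatelyConvex f := hsep
  exact ⟨⟨_, by positivity, hsep'.abs_sub_le_mul_one_add_rpow hp hC.le hgrowth⟩,
    hsep'.locallyLipschitz (by linarith) hC.le hgrowth⟩
end
end

section
/- (Biting lemma of Chacon) Let Ω ⊂ ℝⁿ be a bounded Lebesgue-measurable set and let {z_k} ⊂ L¹(Ω;ℝ^m) be a bounded sequence. Then there exist a subsequence {z_{k_i}}, a function z ∈ L¹(Ω;ℝ^m), and a nested sequence of measurable sets Ω_{j+1} ⊆ Ω_j ⊆ Ω with Lebesgue measure |Ω_j| → 0 as j → ∞, such that for every j ∈ ℕ, z_{k_i} converges to z weakly in L¹(Ω∖Ω_j;ℝ^m) as i → ∞; that is, for every g ∈ L^∞(Ω;ℝ^m) and every j: ∫_{Ω∖Ω_j} ⟨g(x), z_{k_i}(x)⟩ dx → ∫_{Ω∖Ω_j} ⟨g(x), z(x)⟩ dx. -/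
/-!
The truncations of `z_k` at level `r` are bounded in `L²`, so by the sequential Banach–Alaoglu
theorem a diagonal subsequence has, for every `r ∈ ℕ`, a weak limit `v r` of the truncations,
while the tail masses `∫ (‖z_k‖ - r)⁺` converge to some `a r`. Testing against unit vector fields
gives `‖v s - v r‖_{L¹} ≤ a r - a s` for `r ≤ s`; as `a` is antitone and bounded below, `v r`
converges in `L¹` to some `z`.

Next choose levels `R j` with `a (R j)` within `2⁻ʲ` of `inf a`, and a further subsequence along
which the tail masses at `R p` are within `2⁻ᵖ` of their limits. By Markov's inequality the bad
sets `{‖z_{k_i}‖ > R i}` have measure at most `2⁻ⁱ`, so their tail unions `Ω_j` shrink to measure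
zero. Off `Ω_j` the truncation error `∫ (‖z_{k_i}‖ - R p)⁺` is bounded by a difference of two tail
masses, hence by `3 ⋅ 2⁻ᵖ` uniformly in `i`, and weak convergence passes from the truncations to
`z_{k_i}` itself.
-/

open MeasureTheory Filter Topology Metric
open scoped ENNReal RealInnerProductSpace

noncomputable section

lemma min_one_div_mul {a r : ℝ} (ha : 0 ≤ a) (hr : 0 ≤ r) : min 1 (r / a) * a = min a r := by
  rcases ha.eq_or_lt with rfl | ha
  · simp [hr]
  rcases le_total a r with h | h
  · rw [min_eq_left ((one_le_div ha).mpr h), one_mul, min_eq_left h]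
  · rw [min_eq_right ((div_le_one ha).mpr h), div_mul_cancel₀ _ ha.ne', min_eq_right h]

theorem tendsto_of_forall_eventually_dist_le {ι X : Type*} [PseudoMetricSpace X] {l : Filter ι}
    {x : ι → X} {y : ℕ → ι → X} {c : ℕ → X} {L : X} {e : ℕ → ℝ}
    (hy : ∀ p, Tendsto (y p) l (𝓝 (c p))) (hc : Tendsto c atTop (𝓝 L))
    (he : Tendsto e atTop (𝓝 0)) (hxy : ∀ p, ∀ᶠ i in l, dist (x i) (y p i) ≤ e p) :
    Tendsto x l (𝓝 L) := by
  refine Metric.tendsto_nhds.mpr fun ε hε => ?_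
  obtain ⟨p, hep, hcp⟩ := ((he.eventually (gt_mem_nhds (by positivity : 0 < ε / 3))).and
    (hc.eventually (ball_mem_nhds L (by positivity : 0 < ε / 3)))).exists
  filter_upwards [hxy p, (hy p).eventually (ball_mem_nhds (c p) (by positivity : 0 < ε / 3))]
    with i hxi hyi
  have := dist_triangle4 (x i) (y p i) (c p) L
  linarith

theorem exists_strictMono_diagonal_sub_le {A : ℕ → ℕ → ℝ} {a : ℕ → ℝ} {a₀ : ℝ}
    (hA : ∀ r, Tendsto (A r) atTop (𝓝 (a r))) (ha : Antitone a) (ha₀ : Tendsto a atTop (𝓝 a₀))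
    {P : ℕ → ℕ → Prop} (hP : ∀ j, ∀ᶠ r in atTop, P j r) :
    ∃ R : ℕ → ℕ, StrictMono R ∧ (∀ j, P j (R j)) ∧ ∃ N : ℕ → ℕ, StrictMono N ∧
      ∀ p i, p ≤ i → A (R p) (N i) - A (R i) (N i) ≤ 3 * 2⁻¹ ^ p := by
  have hε : ∀ j, (0 : ℝ) < 2⁻¹ ^ j := fun j => by positivity
  obtain ⟨R, hR, hRP⟩ := extraction_forall_of_eventually fun j =>
    (hP j).and (ha₀.eventually (gt_mem_nhds (lt_add_of_pos_right a₀ (hε j))))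
  obtain ⟨N, hN, hAN⟩ := extraction_forall_of_eventually fun i =>
    (Finset.range (i + 1)).eventually_all.mpr fun p _ =>
      (hA (R p)).eventually (ball_mem_nhds (a (R p)) (hε p))
  refine ⟨R, hR, fun j => (hRP j).1, N, hN, fun p i hpi => ?_⟩
  have hp := hAN i p (Finset.mem_range_succ_iff.mpr hpi)
  have hi := hAN i i (Finset.self_mem_range_succ i)
  rw [Real.dist_eq, abs_lt] at hp hi
  have hRp := (hRP p).2
  have hRi := ha.le_of_tendsto ha₀ (R i)
  have hpow := pow_le_pow_of_le_one (by norm_num : (0 : ℝ) ≤ 2⁻¹) (by norm_num) hpi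
  -- `A (R p) (N i) < a₀ + 2 ⋅ 2⁻ᵖ` and `A (R i) (N i) > a₀ - 2⁻ⁱ ≥ a₀ - 2⁻ᵖ`
  linarith

theorem exists_strictMono_forall_tendsto_of_isCompact {ι : Type*} [Countable ι]
    {X : ι → Type*} [∀ q, TopologicalSpace (X q)] {K : ∀ q, Set (X q)}
    (hK : ∀ q, IsCompact (K q)) [∀ q, TopologicalSpace.MetrizableSpace (K q)]
    {x : ∀ q, ℕ → X q} (hx : ∀ q i, x q i ∈ K q) :
    ∃ φ : ℕ → ℕ, StrictMono φ ∧ ∃ a : ∀ q, X q,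
      ∀ q, Tendsto (fun i => x q (φ i)) atTop (𝓝 (a q)) := by
  have : ∀ q, CompactSpace (K q) := fun q => isCompact_iff_compactSpace.mp (hK q)
  obtain ⟨a, -, φ, hφ, h⟩ := isCompact_univ.tendsto_subseq
    (x := fun i q => (⟨x q i, hx q i⟩ : K q)) fun _ => Set.mem_univ _
  exact ⟨φ, hφ, fun q => a q, fun q =>
    (continuous_subtype_val.tendsto _).comp ((continuous_apply q).tendsto _ |>.comp h)⟩

theorem exists_strictMono_forall_tendsto_inner {ι H : Type*} [Countable ι]
    [NormedAddCommGroup H] [InnerProductSpace ℝ H] [CompleteSpace H]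
    [TopologicalSpace.SeparableSpace H] {w : ι → ℕ → H} {B : ι → ℝ}
    (hw : ∀ q i, ‖w q i‖ ≤ B q) :
    ∃ φ : ℕ → ℕ, StrictMono φ ∧ ∃ v : ι → H,
      ∀ q g, Tendsto (fun i => ⟪w q (φ i), g⟫) atTop (𝓝 ⟪v q, g⟫) := by
  let K : ι → Set (WeakDual ℝ H) := fun q => WeakDual.toStrongDual ⁻¹' closedBall 0 (B q)
  have hK : ∀ q, IsCompact (K q) := fun q => WeakDual.isCompact_closedBall 0 (B q)
  have := fun q => WeakDual.metrizable_of_isCompact ℝ H (K q) (hK q)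
  obtain ⟨φ, hφ, a, ha⟩ := exists_strictMono_forall_tendsto_of_isCompact hK
    (x := fun q i => StrongDual.toWeakDual (InnerProductSpace.toDual ℝ H (w q i)))
    fun q i => by simpa [K] using hw q i
  refine ⟨φ, hφ, fun q => (InnerProductSpace.toDual ℝ H).symm (WeakDual.toStrongDual (a q)),
    fun q g => ?_⟩
  rw [InnerProductSpace.toDual_symm_apply]
  exact ((WeakDual.eval_continuous g).tendsto _).comp (ha q)

section Truncation

variable {E : Type*} [NormedAddCommGroup E] [NormedSpace ℝ E]

def normTrunc (r : ℝ) (v : E) : E := min 1 (r / ‖v‖) • v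

lemma norm_normTrunc {r : ℝ} (hr : 0 ≤ r) (v : E) : ‖normTrunc r v‖ = min ‖v‖ r := by
  rw [normTrunc, norm_smul, Real.norm_of_nonneg (by positivity), min_one_div_mul (norm_nonneg v) hr]

lemma norm_sub_normTrunc {r : ℝ} (hr : 0 ≤ r) (v : E) :
    ‖v - normTrunc r v‖ = max (‖v‖ - r) 0 := by
  have hc : min 1 (r / ‖v‖) ≤ 1 := min_le_left _ _
  rw [show v - normTrunc r v = (1 - min 1 (r / ‖v‖)) • v by rw [normTrunc, sub_smul, one_smul],
    norm_smul, Real.norm_of_nonneg (by linarith), sub_mul, one_mul,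
    min_one_div_mul (norm_nonneg v) hr]
  grind

lemma norm_normTrunc_sub_normTrunc {r s : ℝ} (hr : 0 ≤ r) (hrs : r ≤ s) (v : E) :
    ‖normTrunc s v - normTrunc r v‖ = max (‖v‖ - r) 0 - max (‖v‖ - s) 0 := by
  have hc : min 1 (r / ‖v‖) ≤ min 1 (s / ‖v‖) := by gcongr
  rw [normTrunc, normTrunc, ← sub_smul, norm_smul, Real.norm_of_nonneg (by linarith), sub_mul,
    min_one_div_mul (norm_nonneg v) hr, min_one_div_mul (norm_nonneg v) (hr.trans hrs)]
  grind

variable {α : Type*} [MeasurableSpace α] {μ : Measure α}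

lemma aestronglyMeasurable_normTrunc {f : α → E} (hf : AEStronglyMeasurable f μ) (r : ℝ) :
    AEStronglyMeasurable (fun x => normTrunc r (f x)) μ :=
  (aemeasurable_const.min (aemeasurable_const.div hf.norm.aemeasurable)).aestronglyMeasurable.smul
    hf

lemma integrable_normTrunc {f : α → E} (hf : Integrable f μ) {r : ℝ} (hr : 0 ≤ r) :
    Integrable (fun x => normTrunc r (f x)) μ :=
  hf.mono (aestronglyMeasurable_normTrunc hf.aestronglyMeasurable r) (ae_of_all _ fun x => by
    simp only [norm_normTrunc hr]; exact min_le_left _ _)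

lemma memLp_normTrunc [IsFiniteMeasure μ] {f : α → E} (hf : AEStronglyMeasurable f μ) {r : ℝ}
    (hr : 0 ≤ r) (p : ℝ≥0∞) :
    MemLp (fun x => normTrunc r (f x)) p μ :=
  MemLp.of_bound (aestronglyMeasurable_normTrunc hf r) r (ae_of_all _ fun x => by
    simp only [norm_normTrunc hr]; exact min_le_right _ _)

end Truncation

section Integrals

variable {α : Type*} [MeasurableSpace α] {μ : Measure α}

lemma tendsto_measure_biUnion_Ici_zero_of_tsum_ne_top {F : ℕ → Set α}
    (hF : ∑' i, μ (F i) ≠ ∞) : Tendsto (fun n => μ (⋃ i ≥ n, F i)) atTop (𝓝 0) := by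
  simp_rw [Set.iUnion_ge_eq_iUnion_nat_add]
  exact tendsto_of_tendsto_of_tendsto_of_le_of_le tendsto_const_nhds
    (ENNReal.tendsto_sum_nat_add _ hF) (fun _ => zero_le) fun _ => measure_iUnion_le _

variable {E : Type*} [NormedAddCommGroup E]

lemma eventually_forall_measure_lt_norm_le {f : ℕ → α → E} (hf : ∀ k, Integrable (f k) μ)
    {C : ℝ} (hC : ∀ k, ∫ x, ‖f k x‖ ∂μ ≤ C) {δ : ℝ≥0∞} (hδ : 0 < δ) :
    ∀ᶠ r : ℕ in atTop, ∀ k, μ {x | (r : ℝ) < ‖f k x‖} ≤ δ := by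
  have hlim : Tendsto (fun r : ℕ => ENNReal.ofReal C * (r : ℝ≥0∞)⁻¹) atTop (𝓝 0) := by
    simpa using ENNReal.Tendsto.const_mul ENNReal.tendsto_inv_nat_nhds_zero
      (Or.inr ENNReal.ofReal_ne_top)
  filter_upwards [hlim.eventually (gt_mem_nhds hδ), eventually_gt_atTop 0] with r hr hr0 k
  calc μ {x | (r : ℝ) < ‖f k x‖} ≤ μ {x | (r : ℝ≥0∞) ≤ ‖f k x‖ₑ} := measure_mono fun x hx => by
        simpa only [Set.mem_ofPred_eq, ← ofReal_norm, ← ENNReal.ofReal_natCast] using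
          ENNReal.ofReal_le_ofReal (le_of_lt hx)
    _ ≤ (∫⁻ x, ‖f k x‖ₑ ∂μ) / r :=
        meas_ge_le_lintegral_div (hf k).aestronglyMeasurable.enorm
          (Nat.cast_ne_zero.mpr hr0.ne') (ENNReal.natCast_ne_top r)
    _ ≤ ENNReal.ofReal C * (r : ℝ≥0∞)⁻¹ := by
        rw [← ofReal_integral_norm_eq_lintegral_enorm (hf k), div_eq_mul_inv]
        gcongr
        exact hC k
    _ ≤ δ := hr.le

lemma MeasureTheory.Integrable.dist_toL1 {f : α → E} (hf : Integrable f μ) (L : Lp E 1 μ) :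
    dist (hf.toL1 f) L = ∫ x, ‖f x - L x‖ ∂μ := by
  rw [dist_eq_norm, L1.norm_eq_integral_norm]
  refine integral_congr_ae ?_
  filter_upwards [Lp.coeFn_sub (hf.toL1 f) L, hf.coeFn_toL1] with x h1 h2
  rw [h1, Pi.sub_apply, h2]

lemma exists_tendsto_integral_norm_sub_of_antitone [CompleteSpace E] {v : ℕ → α → E}
    (hv : ∀ r, Integrable (v r) μ) {a : ℕ → ℝ} {a₀ : ℝ} (ha : Antitone a)
    (ha₀ : Tendsto a atTop (𝓝 a₀)) (hva : ∀ r s, r ≤ s → ∫ x, ‖v s x - v r x‖ ∂μ ≤ a r - a s) :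
    ∃ l : α → E, Integrable l μ ∧ Tendsto (fun r => ∫ x, ‖v r x - l x‖ ∂μ) atTop (𝓝 0) := by
  have hdist : ∀ r s, dist ((hv r).toL1 (v r)) ((hv s).toL1 (v s)) ≤ a (min r s) - a₀ := by
    intro r s
    rw [(hv r).dist_toL1]
    have : ∫ x, ‖v r x - (hv s).toL1 (v s) x‖ ∂μ = ∫ x, ‖v r x - v s x‖ ∂μ :=
      integral_congr_ae ((hv s).coeFn_toL1.mono fun x hx => by simp only [hx])
    rw [this]
    rcases le_total r s with h | h
    · rw [min_eq_left h]
      simp_rw [norm_sub_rev (v r _)]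
      linarith [hva r s h, ha.le_of_tendsto ha₀ s]
    · rw [min_eq_right h]
      linarith [hva s r h, ha.le_of_tendsto ha₀ r]
  have hcauchy : CauchySeq fun r => (hv r).toL1 (v r) :=
    cauchySeq_of_le_tendsto_0 (fun N => a N - a₀) (fun r s N hr hs =>
      (hdist r s).trans (by linarith [ha (le_min hr hs)])) (by simpa using ha₀.sub_const a₀)
  obtain ⟨L, hL⟩ := cauchySeq_tendsto_of_complete hcauchy
  exact ⟨L, L1.integrable_coeFn L, by
    simpa only [Integrable.dist_toL1] using tendsto_iff_dist_tendsto_zero.mp hL⟩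

def tailMass (μ : Measure α) (f : α → E) (r : ℝ) : ℝ := ∫ x, max (‖f x‖ - r) 0 ∂μ

lemma tailMass_nonneg (f : α → E) (r : ℝ) : 0 ≤ tailMass μ f r :=
  integral_nonneg fun _ => le_max_right _ _

variable [IsFiniteMeasure μ]

lemma integrable_posPart_norm_sub {f : α → E} (hf : Integrable f μ) (r : ℝ) :
    Integrable (fun x => max (‖f x‖ - r) 0) μ :=
  (hf.norm.sub (integrable_const r)).pos_part

lemma tailMass_le_integral_norm {f : α → E} (hf : Integrable f μ) {r : ℝ} (hr : 0 ≤ r) :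
    tailMass μ f r ≤ ∫ x, ‖f x‖ ∂μ :=
  integral_mono (integrable_posPart_norm_sub hf r) hf.norm fun _ =>
    max_le (by linarith) (norm_nonneg _)

lemma tailMass_anti {f : α → E} (hf : Integrable f μ) : Antitone (tailMass μ f) := fun r s hrs =>
  integral_mono (integrable_posPart_norm_sub hf s) (integrable_posPart_norm_sub hf r) fun _ =>
    max_le_max (by linarith) le_rfl

variable [NormedSpace ℝ E]

lemma integral_norm_normTrunc_sub_normTrunc {f : α → E} (hf : Integrable f μ) {r s : ℝ}
    (hr : 0 ≤ r) (hrs : r ≤ s) :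
    ∫ x, ‖normTrunc s (f x) - normTrunc r (f x)‖ ∂μ = tailMass μ f r - tailMass μ f s := by
  simp only [norm_normTrunc_sub_normTrunc hr hrs]
  exact integral_sub (integrable_posPart_norm_sub hf r) (integrable_posPart_norm_sub hf s)

lemma setIntegral_norm_sub_normTrunc_le {f : α → E} (hf : Integrable f μ) {S : Set α}
    (hS : MeasurableSet S) {r s : ℝ} (hr : 0 ≤ r) (hrs : r ≤ s) (hfS : ∀ x ∈ S, ‖f x‖ ≤ s) :
    ∫ x in S, ‖f x - normTrunc r (f x)‖ ∂μ ≤ tailMass μ f r - tailMass μ f s := by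
  have hint := (integrable_posPart_norm_sub hf r).sub (integrable_posPart_norm_sub hf s)
  calc ∫ x in S, ‖f x - normTrunc r (f x)‖ ∂μ
      ≤ ∫ x in S, (max (‖f x‖ - r) 0 - max (‖f x‖ - s) 0) ∂μ := by
        refine setIntegral_mono_on (hf.sub (integrable_normTrunc hf hr)).norm.integrableOn
          hint.integrableOn hS fun x hx => ?_
        rw [norm_sub_normTrunc hr, max_eq_right (sub_nonpos.mpr (hfS x hx)), sub_zero]
    _ ≤ ∫ x, (max (‖f x‖ - r) 0 - max (‖f x‖ - s) 0) ∂μ :=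
        setIntegral_le_integral hint (ae_of_all _ fun _ =>
          sub_nonneg.mpr (max_le_max (by linarith) le_rfl))
    _ = tailMass μ f r - tailMass μ f s :=
        integral_sub (integrable_posPart_norm_sub hf r) (integrable_posPart_norm_sub hf s)

end Integrals

section WeakL1

variable {α : Type*} [MeasurableSpace α] {μ : Measure α}
  {E : Type*} [NormedAddCommGroup E] [InnerProductSpace ℝ E]

def TendstoWeakL1 (μ : Measure α) (f : ℕ → α → E) (l : α → E) : Prop :=
  ∀ g : α → E, AEStronglyMeasurable g μ → (∃ C : ℝ, ∀ᵐ x ∂μ, ‖g x‖ ≤ C) →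
    Tendsto (fun i => ∫ x, ⟪g x, f i x⟫ ∂μ) atTop (𝓝 (∫ x, ⟪g x, l x⟫ ∂μ))

lemma TendstoWeakL1.comp {f : ℕ → α → E} {l : α → E} (h : TendstoWeakL1 μ f l) {φ : ℕ → ℕ}
    (hφ : Tendsto φ atTop atTop) : TendstoWeakL1 μ (fun i => f (φ i)) l :=
  fun g hg hgC => (h g hg hgC).comp hφ

lemma TendstoWeakL1.restrict {f : ℕ → α → E} {l : α → E} (h : TendstoWeakL1 μ f l) {S : Set α}
    (hS : MeasurableSet S) : TendstoWeakL1 (μ.restrict S) f l := by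
  rintro g hg ⟨C, hC⟩
  have hind : ∀ u : α → E,
      ∫ x, ⟪S.indicator g x, u x⟫ ∂μ = ∫ x in S, ⟪g x, u x⟫ ∂μ := fun u => by
    rw [← integral_indicator hS]
    congr 1 with x
    by_cases hx : x ∈ S <;> simp [hx]
  have hbound : ∀ᵐ x ∂μ, ‖S.indicator g x‖ ≤ max C 0 := by
    filter_upwards [(ae_restrict_iff' hS).mp hC] with x hx
    by_cases hxS : x ∈ S <;> simp [hxS, hx]
  simpa only [hind] using
    h _ ((aestronglyMeasurable_indicator_iff hS).mpr hg) ⟨max C 0, hbound⟩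

lemma integrable_inner_of_ae_norm_le {g f : α → E} (hg : AEStronglyMeasurable g μ) {M : ℝ}
    (hgM : ∀ᵐ x ∂μ, ‖g x‖ ≤ M) (hf : Integrable f μ) :
    Integrable (fun x => ⟪g x, f x⟫) μ :=
  (hf.norm.const_mul M).mono' (hg.inner hf.aestronglyMeasurable) <| hgM.mono fun _ hx =>
    (norm_inner_le_norm _ _).trans (mul_le_mul_of_nonneg_right hx (norm_nonneg _))

lemma abs_integral_inner_sub_le {g f h : α → E} (hg : AEStronglyMeasurable g μ) {M : ℝ}
    (hgM : ∀ᵐ x ∂μ, ‖g x‖ ≤ M) (hf : Integrable f μ) (hh : Integrable h μ) :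
    |∫ x, ⟪g x, f x⟫ ∂μ - ∫ x, ⟪g x, h x⟫ ∂μ| ≤ M * ∫ x, ‖f x - h x‖ ∂μ := by
  rw [← integral_sub (integrable_inner_of_ae_norm_le hg hgM hf)
    (integrable_inner_of_ae_norm_le hg hgM hh), ← integral_const_mul, ← Real.norm_eq_abs]
  refine norm_integral_le_of_norm_le ((hf.sub hh).norm.const_mul M) (hgM.mono fun x hx => ?_)
  rw [← inner_sub_right]
  exact (norm_inner_le_norm _ _).trans (mul_le_mul_of_nonneg_right hx (norm_nonneg _))

lemma integral_norm_le_of_forall_integral_inner_le {u : α → E} (hu : AEStronglyMeasurable u μ)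
    {c : ℝ} (h : ∀ g : α → E, StronglyMeasurable g → (∀ x, ‖g x‖ ≤ 1) →
      ∫ x, ⟪g x, u x⟫ ∂μ ≤ c) :
    ∫ x, ‖u x‖ ∂μ ≤ c := by
  set u' := hu.mk u
  have hu' : StronglyMeasurable u' := hu.stronglyMeasurable_mk
  have hg : StronglyMeasurable fun x => ‖u' x‖⁻¹ • u' x :=
    hu'.norm.measurable.inv.stronglyMeasurable.smul hu'
  refine le_of_eq_of_le (integral_congr_ae (hu.ae_eq_mk.mono fun x hx => ?_))
    (h _ hg fun x => ?_)
  · change ‖u x‖ = ⟪‖u' x‖⁻¹ • u' x, u x⟫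
    rw [show u x = u' x from hx, real_inner_smul_left, real_inner_self_eq_norm_sq]
    rcases eq_or_ne ‖u' x‖ 0 with h0 | h0
    · simp [h0]
    · field_simp
  · rw [norm_smul, norm_inv, norm_norm]
    exact inv_mul_le_one_of_le₀ le_rfl (norm_nonneg _)

lemma TendstoWeakL1.of_approx {f : ℕ → α → E} (hf : ∀ i, Integrable (f i) μ)
    {h : ℕ → ℕ → α → E} (hh : ∀ p i, Integrable (h p i) μ) {u : ℕ → α → E}
    (hu : ∀ p, Integrable (u p) μ) {l : α → E} (hl : Integrable l μ)
    (hhu : ∀ p, TendstoWeakL1 μ (h p) (u p))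
    (hul : Tendsto (fun p => ∫ x, ‖u p x - l x‖ ∂μ) atTop (𝓝 0)) {e : ℕ → ℝ}
    (he : Tendsto e atTop (𝓝 0)) (hfh : ∀ p, ∀ᶠ i in atTop, ∫ x, ‖f i x - h p i x‖ ∂μ ≤ e p) :
    TendstoWeakL1 μ f l := by
  rintro g hg ⟨C, hC⟩
  have hM : ∀ᵐ x ∂μ, ‖g x‖ ≤ max C 0 := hC.mono fun _ hx => hx.trans (le_max_left _ _)
  refine tendsto_of_forall_eventually_dist_le (fun p => hhu p g hg ⟨C, hC⟩) ?_
    (by simpa using he.const_mul (max C 0)) fun p => (hfh p).mono fun i hi =>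
      (abs_integral_inner_sub_le hg hM (hf i) (hh p i)).trans
        (mul_le_mul_of_nonneg_left hi (le_max_right _ _))
  refine tendsto_iff_dist_tendsto_zero.mpr <| squeeze_zero (fun _ => dist_nonneg)
    (fun p => abs_integral_inner_sub_le hg hM (hu p) hl) ?_
  simpa using hul.const_mul (max C 0)

variable [IsFiniteMeasure μ]

lemma tendstoWeakL1_of_tendsto_inner {f : ℕ → α → E}
    (hf : ∀ i, MemLp (f i) 2 μ) {v : Lp E 2 μ}
    (h : ∀ G : Lp E 2 μ, Tendsto (fun i => ⟪(hf i).toLp (f i), G⟫) atTop (𝓝 ⟪v, G⟫)) :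
    TendstoWeakL1 μ f v := by
  rintro g hg ⟨C, hC⟩
  have hg2 : MemLp g 2 μ := MemLp.of_bound hg C hC
  have key : ∀ (u : α → E) (U : Lp E 2 μ), U =ᵐ[μ] u →
      ⟪U, hg2.toLp g⟫ = ∫ x, ⟪g x, u x⟫ ∂μ := fun u U hU => by
    rw [L2.inner_def]
    refine integral_congr_ae ?_
    filter_upwards [hU, hg2.coeFn_toLp] with x h1 h2
    rw [h1, h2, real_inner_comm]
  simpa only [key _ _ (hf _).coeFn_toLp, key _ v (ae_eq_refl _)] using h (hg2.toLp g)

lemma integral_inner_normTrunc_sub_le {f g : α → E} (hf : Integrable f μ)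
    (hg : AEStronglyMeasurable g μ) (hg1 : ∀ x, ‖g x‖ ≤ 1) {r s : ℝ} (hr : 0 ≤ r) (hrs : r ≤ s) :
    ∫ x, ⟪g x, normTrunc s (f x)⟫ ∂μ - ∫ x, ⟪g x, normTrunc r (f x)⟫ ∂μ ≤
      tailMass μ f r - tailMass μ f s := by
  rw [← integral_norm_normTrunc_sub_normTrunc hf hr hrs]
  exact (le_abs_self _).trans ((abs_integral_inner_sub_le hg (ae_of_all _ hg1)
    (integrable_normTrunc hf (hr.trans hrs)) (integrable_normTrunc hf hr)).trans_eq (one_mul _))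

lemma integral_norm_sub_le_of_tendstoWeakL1 {f : ℕ → α → E} (hf : ∀ i, Integrable (f i) μ)
    {r s : ℝ} (hr : 0 ≤ r) (hrs : r ≤ s) {u w : α → E} (hu : Integrable u μ)
    (hw : Integrable w μ) (hfu : TendstoWeakL1 μ (fun i x => normTrunc r (f i x)) u)
    (hfw : TendstoWeakL1 μ (fun i x => normTrunc s (f i x)) w) {a b : ℝ}
    (ha : Tendsto (fun i => tailMass μ (f i) r) atTop (𝓝 a))
    (hb : Tendsto (fun i => tailMass μ (f i) s) atTop (𝓝 b)) :
    ∫ x, ‖w x - u x‖ ∂μ ≤ a - b := by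
  refine integral_norm_le_of_forall_integral_inner_le (hw.sub hu).aestronglyMeasurable
    fun g hg hg1 => ?_
  have hgC : ∃ C : ℝ, ∀ᵐ x ∂μ, ‖g x‖ ≤ C := ⟨1, ae_of_all _ hg1⟩
  have hlim := (hfw g hg.aestronglyMeasurable hgC).sub (hfu g hg.aestronglyMeasurable hgC)
  simp only [Pi.sub_apply, inner_sub_right]
  rw [integral_sub (integrable_inner_of_ae_norm_le hg.aestronglyMeasurable (ae_of_all _ hg1) hw)
    (integrable_inner_of_ae_norm_le hg.aestronglyMeasurable (ae_of_all _ hg1) hu)]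
  exact le_of_tendsto_of_tendsto' hlim (ha.sub hb) fun i =>
    integral_inner_normTrunc_sub_le (hf i) hg.aestronglyMeasurable hg1 hr hrs

theorem exists_strictMono_tendsto_tailMass_tendstoWeakL1_normTrunc [IsSeparable μ]
    [CompleteSpace E] [TopologicalSpace.SeparableSpace E] {f : ℕ → α → E}
    (hf : ∀ k, Integrable (f k) μ) {C : ℝ} (hC : ∀ k, ∫ x, ‖f k x‖ ∂μ ≤ C) :
    ∃ φ : ℕ → ℕ, StrictMono φ ∧ ∃ a : ℕ → ℝ, ∃ v : ℕ → Lp E 2 μ,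
      (∀ r : ℕ, Tendsto (fun i => tailMass μ (f (φ i)) r) atTop (𝓝 (a r))) ∧
      ∀ r : ℕ, TendstoWeakL1 μ (fun i x => normTrunc r (f (φ i) x)) (v r) := by
  obtain ⟨φ₁, hφ₁, a, ha⟩ := exists_strictMono_forall_tendsto_of_isCompact
    (K := fun _ => Set.Icc 0 C) (fun _ => isCompact_Icc)
    (x := fun (r : ℕ) k => tailMass μ (f k) r) fun r k =>
      ⟨tailMass_nonneg _ _, (tailMass_le_integral_norm (hf k) r.cast_nonneg).trans (hC k)⟩
  -- needed by `Lp.SecondCountableTopology`, which makes `L²` separable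
  have : Fact ((2 : ℝ≥0∞) ≠ ∞) := ⟨ENNReal.ofNat_ne_top⟩
  have hT : ∀ (r : ℕ) k, MemLp (fun x => normTrunc r (f k x)) 2 μ := fun r k =>
    memLp_normTrunc (hf k).aestronglyMeasurable r.cast_nonneg 2
  obtain ⟨φ₂, hφ₂, v, hv⟩ := exists_strictMono_forall_tendsto_inner
    (w := fun (r : ℕ) i => (hT r (φ₁ i)).toLp _) fun r i =>
      Lp.norm_le_of_ae_bound r.cast_nonneg <| (hT r (φ₁ i)).coeFn_toLp.mono fun x hx => by
        rw [hx, norm_normTrunc r.cast_nonneg]; exact min_le_right _ _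
  exact ⟨φ₁ ∘ φ₂, hφ₁.comp hφ₂, a, v, fun r => (ha r).comp hφ₂.tendsto_atTop,
    fun r => tendstoWeakL1_of_tendsto_inner (fun i => hT r _) (hv r)⟩

theorem tendstoWeakL1_compl_of_tailMass_sub_le {f : ℕ → α → E} (hf : ∀ i, Integrable (f i) μ)
    {R : ℕ → ℕ} (hR : Monotone R) {v : ℕ → α → E} (hv : ∀ p, Integrable (v p) μ)
    {l : α → E} (hl : Integrable l μ)
    (hfv : ∀ p, TendstoWeakL1 μ (fun i x => normTrunc (R p) (f i x)) (v p))
    (hvl : Tendsto (fun p => ∫ x, ‖v p x - l x‖ ∂μ) atTop (𝓝 0))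
    (htail : ∀ p i, p ≤ i → tailMass μ (f i) (R p) - tailMass μ (f i) (R i) ≤ 3 * 2⁻¹ ^ p)
    (n : ℕ) :
    TendstoWeakL1 (μ.restrict (⋃ i ≥ n, toMeasurable μ {x | (R i : ℝ) < ‖f i x‖})ᶜ) f l := by
  set S := (⋃ i ≥ n, toMeasurable μ {x | (R i : ℝ) < ‖f i x‖})ᶜ
  have hS : MeasurableSet S := (MeasurableSet.biUnion (Set.to_countable _) fun i _ =>
    measurableSet_toMeasurable _ _).compl
  have hfS : ∀ i ≥ n, ∀ x ∈ S, ‖f i x‖ ≤ R i := fun i hi x hx => by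
    by_contra hlt
    exact hx (Set.mem_biUnion hi (subset_toMeasurable _ _ (not_le.mp hlt)))
  refine TendstoWeakL1.of_approx (fun i => (hf i).restrict)
    (h := fun p i x => normTrunc (R p) (f i x))
    (fun p i => (integrable_normTrunc (hf i) (R p).cast_nonneg).restrict)
    (fun p => (hv p).restrict) hl.restrict (fun p => (hfv p).restrict hS) ?_
    (by simpa only [mul_zero] using (tendsto_pow_atTop_nhds_zero_of_lt_one
      (by norm_num : (0 : ℝ) ≤ 2⁻¹) (by norm_num)).const_mul 3) fun p => ?_
  · exact squeeze_zero (fun _ => integral_nonneg fun _ => norm_nonneg _) (fun p =>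
      setIntegral_le_integral ((hv p).sub hl).norm (ae_of_all _ fun _ => norm_nonneg _)) hvl
  · filter_upwards [eventually_ge_atTop (max p n)] with i hi
    have hpi : p ≤ i := le_of_max_le_left hi
    exact (setIntegral_norm_sub_normTrunc_le (hf i) hS (R p).cast_nonneg
      (Nat.cast_le.mpr (hR hpi)) (hfS i (le_of_max_le_right hi))).trans (htail p i hpi)

theorem exists_strictMono_tendstoWeakL1_compl [IsSeparable μ] [CompleteSpace E]
    [TopologicalSpace.SeparableSpace E] {f : ℕ → α → E} (hf : ∀ k, Integrable (f k) μ) {C : ℝ}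
    (hC : ∀ k, ∫ x, ‖f k x‖ ∂μ ≤ C) :
    ∃ φ : ℕ → ℕ, StrictMono φ ∧ ∃ l : α → E, Integrable l μ ∧ ∃ B : ℕ → Set α,
      (∀ n, MeasurableSet (B n)) ∧ Antitone B ∧ Tendsto (fun n => μ (B n)) atTop (𝓝 0) ∧
      ∀ n, TendstoWeakL1 (μ.restrict (B n)ᶜ) (fun i => f (φ i)) l := by
  obtain ⟨φ, hφ, a, v, ha, hv⟩ :=
    exists_strictMono_tendsto_tailMass_tendstoWeakL1_normTrunc hf hC
  have hvi : ∀ r, Integrable (v r) μ := fun r => (Lp.memLp (v r)).integrable one_le_two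
  have ha_anti : Antitone a := fun r s hrs => le_of_tendsto_of_tendsto' (ha s) (ha r) fun i =>
    tailMass_anti (hf _) (Nat.cast_le.mpr hrs)
  have ha₀ := tendsto_atTop_ciInf ha_anti
    ⟨0, Set.forall_mem_range.mpr fun r => ge_of_tendsto' (ha r) fun i => tailMass_nonneg _ _⟩
  obtain ⟨l, hl, hvl⟩ := exists_tendsto_integral_norm_sub_of_antitone hvi ha_anti ha₀
    fun r s hrs => integral_norm_sub_le_of_tendstoWeakL1 (fun i => hf _) r.cast_nonneg
      (Nat.cast_le.mpr hrs) (hvi r) (hvi s) (hv r) (hv s) (ha r) (ha s)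
  obtain ⟨R, hR, hRμ, N, hN, htail⟩ := exists_strictMono_diagonal_sub_le ha ha_anti ha₀
    (P := fun j r => ∀ k, μ {x | (r : ℝ) < ‖f k x‖} ≤ 2⁻¹ ^ j)
    fun j => eventually_forall_measure_lt_norm_le hf hC (ENNReal.pow_pos (by simp) j)
  set F : ℕ → Set α := fun i => toMeasurable μ {x | (R i : ℝ) < ‖f (φ (N i)) x‖}
  have hF : ∑' i, μ (F i) ≠ ∞ := ne_top_of_le_ne_top (by simp [ENNReal.tsum_geometric])
    (ENNReal.tsum_le_tsum fun i => (measure_toMeasurable _).trans_le (hRμ i _))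
  refine ⟨φ ∘ N, hφ.comp hN, l, hl, fun n => ⋃ i ≥ n, F i, fun n => MeasurableSet.biUnion
    (Set.to_countable _) fun i _ => measurableSet_toMeasurable _ _,
    fun m n hmn => Set.biUnion_mono (fun i hi => hmn.trans hi) fun _ _ => subset_rfl,
    tendsto_measure_biUnion_Ici_zero_of_tsum_ne_top hF, ?_⟩
  exact tendstoWeakL1_compl_of_tailMass_sub_le (fun i => hf _) hR.monotone (fun p => hvi _) hl
    (fun p => (hv (R p)).comp hN.tendsto_atTop) (hvl.comp hR.tendsto_atTop) htail

end WeakL1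

/-- The Biting lemma of Chacon: every bounded sequence in `L¹(Ω;ℝᵐ)` (with `Ω ⊆ ℝⁿ` bounded
and measurable) has a subsequence `z_{k_i}`, a limit `z ∈ L¹(Ω;ℝᵐ)` and a nested sequence of
measurable sets `Ω_{j+1} ⊆ Ω_j ⊆ Ω` with `|Ω_j| → 0`, such that for every `j`,
`z_{k_i} ⇀ z` weakly in `L¹(Ω ∖ Ω_j; ℝᵐ)`, i.e. the integrals against every essentially
bounded measurable test function converge. -/
theorem stmt10 {n m : ℕ} (Ω : Set (EuclideanSpace ℝ (Fin n)))
    (hΩm : MeasurableSet Ω) (hΩb : Bornology.IsBounded Ω)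
    (z : ℕ → EuclideanSpace ℝ (Fin n) → EuclideanSpace ℝ (Fin m))
    (hint : ∀ k, IntegrableOn (z k) Ω)
    (hbdd : ∃ C : ℝ, ∀ k, (∫ x in Ω, ‖z k x‖) ≤ C) :
    ∃ φ : ℕ → ℕ, StrictMono φ ∧
    ∃ zl : EuclideanSpace ℝ (Fin n) → EuclideanSpace ℝ (Fin m), IntegrableOn zl Ω ∧
    ∃ Ωs : ℕ → Set (EuclideanSpace ℝ (Fin n)),
      (∀ j, MeasurableSet (Ωs j) ∧ Ωs j ⊆ Ω) ∧
      (∀ j, Ωs (j + 1) ⊆ Ωs j) ∧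
      Tendsto (fun j => volume (Ωs j)) atTop (nhds 0) ∧
      ∀ (j : ℕ) (g : EuclideanSpace ℝ (Fin n) → EuclideanSpace ℝ (Fin m)),
        AEStronglyMeasurable g (volume.restrict Ω) →
        (∃ C : ℝ, ∀ᵐ x ∂(volume.restrict Ω), ‖g x‖ ≤ C) →
        Tendsto (fun i => ∫ x in Ω \ Ωs j, ⟪g x, z (φ i) x⟫) atTop
          (nhds (∫ x in Ω \ Ωs j, ⟪g x, zl x⟫)) := by
  obtain ⟨C, hC⟩ := hbdd
  have : IsFiniteMeasure (volume.restrict Ω) :=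
    isFiniteMeasure_restrict.mpr hΩb.measure_lt_top.ne
  obtain ⟨φ, hφ, l, hl, B, hBm, hBa, hB0, hBl⟩ := exists_strictMono_tendstoWeakL1_compl hint hC
  have hrestrict : ∀ j, volume.restrict (Ω \ (Ω ∩ B j)) = (volume.restrict Ω).restrict (B j)ᶜ :=
    fun j => by rw [Measure.restrict_restrict (hBm j).compl, Set.sdiff_self_inter,
      Set.sdiff_eq_compl_inter]
  refine ⟨φ, hφ, l, hl, fun j => Ω ∩ B j, fun j => ⟨hΩm.inter (hBm j), Set.inter_subset_left⟩,
    fun j => Set.inter_subset_inter_right _ (hBa j.le_succ), ?_, fun j g hg ⟨M, hM⟩ => ?_⟩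
  · simpa only [Measure.restrict_apply (hBm _), Set.inter_comm] using hB0
  · rw [hrestrict]
    exact hBl j g hg.restrict ⟨M, ae_restrict_of_ae hM⟩
end
end

section
/- Let p > 1 and let f : ℝ^{m×n} → ℝ be continuous and positively p-homogeneous, i.e., f(tA) = t^p f(A) for all t ≥ 0 and A ∈ ℝ^{m×n}. Let ρ ∈ ℝⁿ be a unit vector, let D_ρ := {x ∈ B(0,1) : x·ρ < 0} be the unit half-ball and Γ_ρ := {x ∈ B(0,1) : x·ρ = 0} the planar part of its boundary, and call φ admissible if φ : ℝⁿ → ℝ^m is Lipschitz and vanishes on ∂D_ρ ∖ Γ_ρ (the spherical part of the boundary). Suppose there exists q ∈ ℝ^m such that for every admissible φ: ∫_{Γ_ρ} q·φ(x) dH^{n−1}(x) + f(0)·|D_ρ| ≤ ∫_{D_ρ} f(∇φ(x)) dx. Then ∫_{D_ρ} f(∇φ(x)) dx ≥ 0 for every admissible φ; i.e., the quasiconvexity-at-the-boundary inequality holds with q = 0. -/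
open MeasureTheory Filter Topology Metric Bornology
open scoped ENNReal NNReal RealInnerProductSpace

noncomputable section

/-! Replacing `φ` by `t • φ` scales the boundary term by `t` and the bulk term by `t ^ p`;
since `p > 1`, a negative bulk term would make the right-hand side beat any fixed boundary
term as `t → ∞`. -/

lemma grad_const_smul {n m : ℕ} (c : ℝ)
    (u : EuclideanSpace ℝ (Fin n) → EuclideanSpace ℝ (Fin m)) (x : EuclideanSpace ℝ (Fin n)) :
    grad (c • u) x = c • grad u x := by
  ext i j
  simp [grad, fderiv_const_smul_field]

lemma map_zero_of_rpow_homogeneous {E : Type*} [AddCommGroup E] [Module ℝ E] {p : ℝ}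
    (hp : p ≠ 0) {f : E → ℝ} (hhom : ∀ t : ℝ, 0 ≤ t → ∀ A, f (t • A) = t ^ p * f A) :
    f 0 = 0 := by
  simpa [Real.zero_rpow hp] using hhom 0 le_rfl 0

lemma nonneg_of_forall_mul_le_rpow_mul {p c a : ℝ} (hp : 1 < p)
    (h : ∀ t : ℝ, 0 < t → t * c ≤ t ^ p * a) : 0 ≤ a := by
  by_contra! ha
  have hlim : Tendsto (fun t : ℝ => t ^ (p - 1) * a) atTop atBot :=
    (tendsto_rpow_atTop (by linarith)).atTop_mul_const_of_neg ha
  obtain ⟨t, htc, ht⟩ := ((hlim.eventually (eventually_lt_atBot c)).and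
    (eventually_gt_atTop 0)).exists
  have hpow : t ^ p = t * t ^ (p - 1) := by
    rw [← Real.rpow_one_add' ht.le (by linarith)]
    ring_nf
  have := h t ht
  rw [hpow, mul_assoc] at this
  exact htc.not_ge (le_of_mul_le_mul_left this ht)

theorem stmt16_general {m n : ℕ} (p : ℝ) (hp : 1 < p)
    (f : Matrix (Fin m) (Fin n) ℝ → ℝ)
    (hhom : ∀ t : ℝ, 0 ≤ t → ∀ A, f (t • A) = t ^ p * f A)
    (D Γ : Set (EuclideanSpace ℝ (Fin n)))
    (q : EuclideanSpace ℝ (Fin m))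
    (hq : ∀ φ : EuclideanSpace ℝ (Fin n) → EuclideanSpace ℝ (Fin m),
      (∃ K : ℝ≥0, LipschitzWith K φ) → (∀ x ∈ frontier D \ Γ, φ x = 0) →
        (∫ x in Γ, ⟪q, φ x⟫ ∂(MeasureTheory.Measure.hausdorffMeasure ((n : ℝ) - 1))) +
            f 0 * (volume D).toReal ≤
          ∫ x in D, f (grad φ x)) :
    ∀ φ : EuclideanSpace ℝ (Fin n) → EuclideanSpace ℝ (Fin m),
      (∃ K : ℝ≥0, LipschitzWith K φ) → (∀ x ∈ frontier D \ Γ, φ x = 0) →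
        0 ≤ ∫ x in D, f (grad φ x) := by
  rintro φ ⟨K, hK⟩ hbd
  have hf0 : f 0 = 0 := map_zero_of_rpow_homogeneous (by linarith) hhom
  refine nonneg_of_forall_mul_le_rpow_mul hp
    (c := ∫ x in Γ, ⟪q, φ x⟫ ∂(MeasureTheory.Measure.hausdorffMeasure ((n : ℝ) - 1)))
    fun t ht => ?_
  have hscaled := hq (t • φ) ⟨_, (lipschitzWith_smul t).comp hK⟩ fun x hx => by simp [hbd x hx]
  simpa [hf0, grad_const_smul, hhom t ht.le, real_inner_smul_right, integral_const_mul]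
    using hscaled

/-- For a continuous, positively `p`-homogeneous `f` (`p > 1`) that is quasiconvex at the
boundary at `0` with respect to the unit normal `ρ` — i.e. there is `q ∈ ℝᵐ` with
`∫_{Γ_ρ} q·φ dH^{n−1} + f(0)|D_ρ| ≤ ∫_{D_ρ} f(∇φ)` for every Lipschitz `φ` vanishing on the
spherical part `∂D_ρ ∖ Γ_ρ` of the boundary of the half-ball `D_ρ` — the inequality holds
with `q = 0`: `∫_{D_ρ} f(∇φ) ≥ 0` for every such admissible `φ`. -/
theorem stmt16 {m n : ℕ} (p : ℝ) (hp : 1 < p)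
    (f : Matrix (Fin m) (Fin n) ℝ → ℝ) (hfc : Continuous f)
    (hhom : ∀ t : ℝ, 0 ≤ t → ∀ A, f (t • A) = t ^ p * f A)
    (ρ : EuclideanSpace ℝ (Fin n)) (hρ : ‖ρ‖ = 1)
    (D Γ : Set (EuclideanSpace ℝ (Fin n)))
    (hD : D = {x | x ∈ Metric.ball (0 : EuclideanSpace ℝ (Fin n)) 1 ∧ ⟪x, ρ⟫ < 0})
    (hΓ : Γ = {x | x ∈ Metric.ball (0 : EuclideanSpace ℝ (Fin n)) 1 ∧ ⟪x, ρ⟫ = 0})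
    (q : EuclideanSpace ℝ (Fin m))
    (hq : ∀ φ : EuclideanSpace ℝ (Fin n) → EuclideanSpace ℝ (Fin m),
      (∃ K : ℝ≥0, LipschitzWith K φ) → (∀ x ∈ frontier D \ Γ, φ x = 0) →
        (∫ x in Γ, ⟪q, φ x⟫ ∂(MeasureTheory.Measure.hausdorffMeasure ((n : ℝ) - 1))) +
            f 0 * (volume D).toReal ≤
          ∫ x in D, f (grad φ x)) :
    ∀ φ : EuclideanSpace ℝ (Fin n) → EuclideanSpace ℝ (Fin m),
      (∃ K : ℝ≥0, LipschitzWith K φ) → (∀ x ∈ frontier D \ Γ, φ x = 0) →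
        0 ≤ ∫ x in D, f (grad φ x) :=
  stmt16_general p hp f hhom D Γ q hq
end
end
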